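/- arXiv:2206.10806 — 5 statements merged into one kernel-verified Lean document; each statement's English description precedes it below -/
import Mathlib

section
/- (Singleton bound for symbol-pair codes) If C ⊆ F_q^n is a code with minimum symbol-pair distance d_p satisfying 2 ≤ d_p ≤ n, then |C| ≤ q^{n - d_p + 2}. -/
open Polynomial

/-- Hamming weight of a cyclic word `x : ZMod n → F`. -/
def hammingWt {F : Type*} [Zero F] [DecidableEq F] (n : ℕ) (x : ZMod n → F) : ℕ :=
  ((Finset.range n).filter fun i : ℕ => x (↑i) ≠ 0).card

/-- Symbol-pair weight of a cyclic word `x : ZMod n → F`. -/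
def pairWt {F : Type*} [Zero F] [DecidableEq F] (n : ℕ) (x : ZMod n → F) : ℕ :=
  ((Finset.range n).filter fun i : ℕ =>
    (x (↑i), x (↑i + 1)) ≠ ((0 : F), (0 : F))).card

/-- Symbol-pair distance between two words of length `n`. -/
def pairDist {F : Type*} [DecidableEq F] (n : ℕ) (x y : ZMod n → F) : ℕ :=
  ((Finset.range n).filter fun i : ℕ =>
    (x (↑i), x (↑i + 1)) ≠ (y (↑i), y (↑i + 1))).card

/-- The polynomial associated to a word. -/
noncomputable def toPoly {F : Type*} [Semiring F] (n : ℕ) (x : ZMod n → F) : F[X] :=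
  ∑ i ∈ Finset.range n, Polynomial.C (x (↑i)) * X ^ i

/-- The cyclic code of length `n` with generator polynomial `g`:
a word of length `n` is a codeword iff its associated polynomial
(of degree `< n`) is divisible by `g`. -/
def cyclicCode {F : Type*} [Field F] (n : ℕ) (g : F[X]) : Set (ZMod n → F) :=
  {c | g ∣ toPoly n c}

theorem stmt_4 {F : Type*} [Field F] [Fintype F] [DecidableEq F] (n : ℕ)
    (C : Set (ZMod n → F)) (dp : ℕ) (h2 : 2 ≤ dp) (hn : dp ≤ n)
    (hmin : ∀ x ∈ C, ∀ y ∈ C, x ≠ y → dp ≤ pairDist n x y)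
    (hex : ∃ x ∈ C, ∃ y ∈ C, x ≠ y ∧ pairDist n x y = dp) :
    Nat.card C ≤ Fintype.card F ^ (n - dp + 2) := by
  have hn2 : 2 ≤ n := le_trans h2 hn
  let f : C → (Fin (n - dp + 2) → F) := fun x i => (x : ZMod n → F) (↑(i : ℕ))
  have hinj : Function.Injective f := by
    rintro ⟨x, hx⟩ ⟨y, hy⟩ hf
    by_contra hne
    have hne' : x ≠ y := fun h => hne (by simpa using h)
    have hd := hmin x hx y hy hne'
    have hag : ∀ j : ℕ, j < n - dp + 2 → x ↑j = y ↑j := by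
      intro j hj
      have := congrFun hf ⟨j, hj⟩
      simpa [f] using this
    have hsub : ((Finset.range n).filter fun i : ℕ =>
        (x (↑i), x (↑i + 1)) ≠ (y (↑i), y (↑i + 1))) ⊆
        Finset.Ico (n - dp + 1) n := by
      intro i hi
      simp only [Finset.mem_filter, Finset.mem_range] at hi
      obtain ⟨hin, hne2⟩ := hi
      simp only [Finset.mem_Ico]
      refine ⟨?_, hin⟩
      by_contra hlt
      push_neg at hlt
      apply hne2
      have h1 : x ↑i = y ↑i := hag i (by omega)
      have h2' : x (↑i + 1) = y (↑i + 1) := by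
        have he : ((i : ZMod n) + 1) = ((i + 1 : ℕ) : ZMod n) := by push_cast; ring
        rw [he]
        exact hag (i + 1) (by omega)
      rw [h1, h2']
    have hle : pairDist n x y ≤ dp - 1 := by
      calc pairDist n x y ≤ (Finset.Ico (n - dp + 1) n).card :=
            Finset.card_le_card hsub
        _ = n - (n - dp + 1) := Nat.card_Ico _ _
        _ ≤ dp - 1 := by omega
    omega
  have key := Nat.card_le_card_of_injective f hinj
  rwa [Nat.card_eq_fintype_card (α := Fin (n - dp + 2) → F), Fintype.card_fun,
    Fintype.card_fin] at key
end

section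
/- Let p be a prime, q a power of p, s ≥ 1, and l a positive integer with l | (q^2 − 1) and l ≥ q + 1. Let δ be a primitive l-th root of unity in F_{q^2}, and let C be the cyclic code of length n = l·p^s over F_q with generator polynomial g(x) = (x−1)(x−δ)(x−δ^q). Then the minimum symbol-pair distance of C equals 4; in particular, C is an AMDS symbol-pair code (d_p = n − k + 1 where k = n − 3 is the dimension). -/
open Polynomial

section Aux

open Finset

lemma card_filter_cast (n : ℕ) [NeZero n] (Q : ZMod n → Prop) [DecidablePred Q] :
    ((Finset.range n).filter fun i : ℕ => Q ↑i).card = (Finset.univ.filter Q).card := by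
  refine Finset.card_bij (fun i _ => (↑i : ZMod n)) ?_ ?_ ?_
  · intro a ha; simp only [mem_filter, mem_range] at ha ⊢; exact ⟨mem_univ _, ha.2⟩
  · intro a ha b hb h
    simp only [mem_filter, mem_range] at ha hb
    have := congrArg ZMod.val h
    rwa [ZMod.val_cast_of_lt ha.1, ZMod.val_cast_of_lt hb.1] at this
  · intro b hb
    refine ⟨b.val, ?_, ?_⟩
    · simp only [mem_filter, mem_range] at hb ⊢
      exact ⟨ZMod.val_lt b, by rw [ZMod.natCast_val, ZMod.cast_id]; exact hb.2⟩
    · simp [ZMod.natCast_val, ZMod.cast_id]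

lemma eval₂_toPoly {K L : Type*} [CommRing K] [CommRing L] (f : K →+* L) (n : ℕ) [NeZero n]
    (c : ZMod n → K) (x : L) :
    eval₂ f x (toPoly n c) = ∑ i : ZMod n, f (c i) * x ^ i.val := by
  unfold toPoly
  rw [eval₂_finset_sum]
  simp only [eval₂_mul, eval₂_C, eval₂_X_pow]
  refine Finset.sum_bij' (fun i _ => (↑i : ZMod n)) (fun i _ => i.val) ?_ ?_ ?_ ?_ ?_
  · intros; exact mem_univ _
  · intro a _; exact mem_range.mpr (ZMod.val_lt a)
  · intro a ha; exact ZMod.val_cast_of_lt (mem_range.mp ha)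
  · intro a _; simp
  · intro a ha; rw [ZMod.val_cast_of_lt (mem_range.mp ha)]

lemma isCoprime_X_sub_C' {L : Type*} [Field L] (a b : L) (h : a ≠ b) :
    IsCoprime (X - C a) (X - C b) := by
  refine ⟨C ((b - a)⁻¹), -C ((b - a)⁻¹), ?_⟩
  have hba : b - a ≠ 0 := sub_ne_zero.mpr h.symm
  have : C ((b - a)⁻¹) * (X - C a) + -C ((b - a)⁻¹) * (X - C b)
      = C ((b-a)⁻¹ * (b - a)) := by rw [C_mul, C_sub]; ring
  rw [this, inv_mul_cancel₀ hba, C_1]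

lemma shift_closed_eq_univ (n : ℕ) [NeZero n] (S : Finset (ZMod n))
    (h : ∀ x ∈ S, x - 1 ∈ S) (hne : S.Nonempty) : S = Finset.univ := by
  obtain ⟨a, ha⟩ := hne
  have key : ∀ k : ℕ, a - (k : ZMod n) ∈ S := by
    intro k
    induction k with
    | zero => simpa using ha
    | succ m ih =>
      have := h _ ih
      rwa [sub_sub, ← Nat.cast_add_one] at this
  apply Finset.eq_univ_of_forall
  intro y
  have := key (a - y).val
  rwa [ZMod.natCast_val, ZMod.cast_id, sub_sub_cancel] at this

end Aux

theorem stmt_8 {K L : Type*} [Field K] [Fintype K] [DecidableEq K]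
    [Field L] [Fintype L] [Algebra K L]
    (p q s l : ℕ) (hp : p.Prime) (hq : Fintype.card K = q)
    (hqpow : ∃ m : ℕ, 0 < m ∧ q = p ^ m)
    (hL : Fintype.card L = q ^ 2)
    (hs : 1 ≤ s) (hl : 0 < l) (hld : l ∣ q ^ 2 - 1) (hlq : q + 1 ≤ l)
    (δ : L) (hδ : IsPrimitiveRoot δ l)
    (g : K[X])
    (hg : g.map (algebraMap K L)
      = (X - 1) * (X - Polynomial.C δ) * (X - Polynomial.C (δ ^ q))) :
    (∃ c ∈ cyclicCode (l * p ^ s) g, c ≠ 0 ∧ pairWt (l * p ^ s) c = 4) ∧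
    (∀ c ∈ cyclicCode (l * p ^ s) g, c ≠ 0 → 4 ≤ pairWt (l * p ^ s) c) ∧
    4 = l * p ^ s - (l * p ^ s - 3) + 1 := by
  classical
  obtain ⟨m, hm, hqm⟩ := hqpow
  have hq2 : 2 ≤ q := by
    have : p ≤ p ^ m := Nat.le_self_pow (by omega) p
    have := hp.two_le; omega
  have hl3 : 3 ≤ l := by omega
  have hps : 2 ≤ p ^ s := by
    have : p ≤ p ^ s := Nat.le_self_pow (by omega) p
    have := hp.two_le; omega
  set n := l * p ^ s with hn
  have hn2l : 2 * l ≤ n := by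
    have := Nat.mul_le_mul_left l hps; omega
  have hn6 : 6 ≤ n := by omega
  have hln : l < n := by omega
  haveI : NeZero n := ⟨by omega⟩
  haveI : Fact (1 < n) := ⟨by omega⟩
  set f := algebraMap K L with hfdef
  have hf : Function.Injective f := f.injective
  have hδ0 : δ ≠ 0 := by
    intro h
    have := hδ.pow_eq_one
    rw [h, zero_pow (by omega : l ≠ 0)] at this
    exact zero_ne_one this
  have hδ1 : δ ≠ 1 := by
    intro h
    have := Nat.le_of_dvd one_pos (hδ.dvd_of_pow_eq_one 1 (by rw [h, one_pow]))
    omega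
  have hδq1 : δ ^ q ≠ 1 := by
    intro h
    have := Nat.le_of_dvd (by omega) (hδ.dvd_of_pow_eq_one q h)
    omega
  have hδδq : δ ≠ δ ^ q := by
    intro h
    have h2 : δ ^ (q - 1) * δ = 1 * δ := by
      rw [one_mul, ← pow_succ, show q - 1 + 1 = q by omega]; exact h.symm
    have h3 : δ ^ (q - 1) = 1 := mul_right_cancel₀ hδ0 h2
    have := Nat.le_of_dvd (by omega) (hδ.dvd_of_pow_eq_one _ h3)
    omega
  have hδn : δ ^ n = 1 := by rw [hn, pow_mul, hδ.pow_eq_one, one_pow]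
  have hpowmod : ∀ k : ℕ, δ ^ (k % n) = δ ^ k := by
    intro k
    conv_rhs => rw [← Nat.mod_add_div k n, pow_add, pow_mul, hδn, one_pow, mul_one]
  -- divisors of g.map f
  have hd1 : (X - C (1 : L)) ∣ g.map f := by
    rw [hg, C_1]
    exact dvd_mul_of_dvd_left (dvd_mul_right _ _) _
  have hdδ : (X - C δ) ∣ g.map f := by
    rw [hg]
    exact dvd_mul_of_dvd_left (dvd_mul_left _ _) _
  -- root-evaluation for codewords
  have heval : ∀ c : ZMod n → K, g ∣ toPoly n c → ∀ x : L, (X - C x) ∣ g.map f →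
      ∑ i : ZMod n, f (c i) * x ^ i.val = 0 := by
    intro c hc x hx
    have h1 : (X - C x) ∣ (toPoly n c).map f := hx.trans (Polynomial.map_dvd f hc)
    have h2 : ((toPoly n c).map f).IsRoot x := dvd_iff_isRoot.mp h1
    rw [IsRoot, eval_map, eval₂_toPoly] at h2
    exact h2
  have castinj : ∀ a b : ℕ, a < n → b < n → (a : ZMod n) = (b : ZMod n) → a = b := by
    intro a b ha hb h
    have := congrArg ZMod.val h
    rwa [ZMod.val_cast_of_lt ha, ZMod.val_cast_of_lt hb] at this
  refine ⟨?_, ?_, by omega⟩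
  · -- existence of a pair-weight-4 codeword
    set c : ZMod n → K := fun i => if i = (l : ZMod n) then 1 else if i = 0 then -1 else 0
      with hcdef
    have hl0 : (l : ZMod n) ≠ 0 := by
      intro h
      exact absurd (castinj l 0 hln (by omega) (by simpa using h)) (by omega)
    have hc0 : c 0 = -1 := by simp [hcdef, Ne.symm hl0]
    have hcl : c (l : ZMod n) = 1 := by simp [hcdef]
    have hcz : ∀ j : ZMod n, j ≠ (l : ZMod n) → j ≠ 0 → c j = 0 := by
      intro j h1 h2; simp [hcdef, h1, h2]
    have htp : toPoly n c = X ^ l - 1 := by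
      unfold toPoly
      have hsub : ({0, l} : Finset ℕ) ⊆ Finset.range n := by
        intro j hj
        simp only [Finset.mem_insert, Finset.mem_singleton] at hj
        rcases hj with rfl | rfl <;> simp [Finset.mem_range] <;> omega
      rw [← Finset.sum_subset hsub]
      · rw [Finset.sum_pair (show (0:ℕ) ≠ l by omega)]
        rw [Nat.cast_zero, hc0, hcl]
        simp only [map_neg, map_one, pow_zero, mul_one, one_mul]
        ring
      · intro j hj hj'
        simp only [Finset.mem_insert, Finset.mem_singleton, not_or] at hj'
        rw [hcz ↑j ?_ ?_, map_zero, zero_mul]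
        · intro h
          exact hj'.2 (castinj j l (Finset.mem_range.mp hj) hln h)
        · intro h
          exact hj'.1 (castinj j 0 (Finset.mem_range.mp hj) (by omega) (by simpa using h))
    have hmem : c ∈ cyclicCode n g := by
      show g ∣ toPoly n c
      rw [htp]
      have gmonic : g.Monic := by
        apply Polynomial.monic_of_injective hf
        rw [hg]
        exact ((monic_X_sub_C (1:L)).mul (monic_X_sub_C δ)).mul (monic_X_sub_C (δ ^ q))
      have e1 : (X - C (1:L)) ∣ X ^ l - 1 := dvd_iff_isRoot.mpr (by simp)
      have eδ : (X - C δ) ∣ (X ^ l - 1 : L[X]) :=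
        dvd_iff_isRoot.mpr (by simp [IsRoot, hδ.pow_eq_one])
      have hql : (δ ^ q) ^ l = 1 := by
        rw [← pow_mul, mul_comm, pow_mul, hδ.pow_eq_one, one_pow]
      have eq' : (X - C (δ ^ q)) ∣ (X ^ l - 1 : L[X]) :=
        dvd_iff_isRoot.mpr (by simp [IsRoot, hql])
      have h12 : (X - C (1:L)) * (X - C δ) ∣ X ^ l - 1 :=
        (isCoprime_X_sub_C' _ _ hδ1.symm).mul_dvd e1 eδ
      have copm : IsCoprime ((X - C (1:L)) * (X - C δ)) (X - C (δ ^ q)) :=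
        IsCoprime.mul_left (isCoprime_X_sub_C' _ _ (Ne.symm hδq1)) (isCoprime_X_sub_C' _ _ hδδq)
      have hdvd : (X - C (1:L)) * (X - C δ) * (X - C (δ ^ q)) ∣ (X ^ l - 1 : L[X]) :=
        copm.mul_dvd h12 eq'
      have hmapdvd : g.map f ∣ (X ^ l - 1 : K[X]).map f := by
        rw [hg, Polynomial.map_sub, Polynomial.map_pow, Polynomial.map_X, Polynomial.map_one]
        rwa [C_1] at hdvd
      exact (Polynomial.map_dvd_map f hf gmonic).mp hmapdvd
    refine ⟨c, hmem, ?_, ?_⟩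
    · intro h
      have : c 0 = 0 := by rw [h]; rfl
      rw [hc0] at this
      exact one_ne_zero (neg_eq_zero.mp this)
    · -- pair weight is 4
      unfold pairWt
      rw [card_filter_cast n (fun j => (c j, c (j + 1)) ≠ ((0:K), (0:K)))]
      have hci : ∀ j : ZMod n, c j ≠ 0 ↔ (j = (l : ZMod n) ∨ j = 0) := by
        intro j
        by_cases h1 : j = (l : ZMod n) <;> by_cases h2 : j = 0 <;>
          simp [hcdef, h1, h2, Ne.symm hl0]
      have hset : Finset.univ.filter (fun j : ZMod n => (c j, c (j + 1)) ≠ ((0:K), (0:K)))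
          = {0, ((l - 1 : ℕ) : ZMod n), (l : ZMod n), ((n - 1 : ℕ) : ZMod n)} := by
        ext i
        simp only [Finset.mem_filter, Finset.mem_univ, true_and, Finset.mem_insert,
          Finset.mem_singleton, Ne, Prod.mk.injEq, not_and]
        have e1 : ((l - 1 : ℕ) : ZMod n) = (l : ZMod n) - 1 := by
          rw [Nat.cast_sub (by omega), Nat.cast_one]
        have e2 : ((n - 1 : ℕ) : ZMod n) = -1 := by
          rw [Nat.cast_sub (by omega), Nat.cast_one, ZMod.natCast_self, zero_sub]
        constructor
        · intro h
          rcases Decidable.em (c i = 0) with h0 | h0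
          · have h1 := h h0
            rcases (hci (i + 1)).mp h1 with h2 | h2
            · right; left; rw [e1, eq_sub_iff_add_eq]; exact h2
            · right; right; right; rw [e2, eq_neg_iff_add_eq_zero]; exact h2
          · rcases (hci i).mp h0 with h2 | h2
            · right; right; left; exact h2
            · left; exact h2
        · intro h h0
          rcases h with rfl | h | rfl | h
          · exact absurd ((hci 0).mpr (Or.inr rfl)) (not_not.mpr h0)
          · rw [e1, eq_sub_iff_add_eq] at h
            intro hx; exact ((hci (i+1)).mpr (Or.inl h)) hx
          · exact absurd ((hci _).mpr (Or.inl rfl)) (not_not.mpr h0)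
          · rw [e2, eq_neg_iff_add_eq_zero] at h
            intro hx; exact ((hci (i+1)).mpr (Or.inr h)) hx
      rw [hset]
      have d1 : (0 : ZMod n) ≠ ((l - 1 : ℕ) : ZMod n) := by
        intro h; exact absurd (castinj 0 (l-1) (by omega) (by omega) (by simpa using h)) (by omega)
      have d2 : (0 : ZMod n) ≠ (l : ZMod n) := by
        intro h; exact absurd (castinj 0 l (by omega) (by omega) (by simpa using h)) (by omega)
      have d3 : (0 : ZMod n) ≠ ((n - 1 : ℕ) : ZMod n) := by
        intro h; exact absurd (castinj 0 (n-1) (by omega) (by omega) (by simpa using h)) (by omega)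
      have d4 : ((l - 1 : ℕ) : ZMod n) ≠ (l : ZMod n) := by
        intro h; exact absurd (castinj (l-1) l (by omega) (by omega) h) (by omega)
      have d5 : ((l - 1 : ℕ) : ZMod n) ≠ ((n - 1 : ℕ) : ZMod n) := by
        intro h; exact absurd (castinj (l-1) (n-1) (by omega) (by omega) h) (by omega)
      have d6 : (l : ZMod n) ≠ ((n - 1 : ℕ) : ZMod n) := by
        intro h; exact absurd (castinj l (n-1) (by omega) (by omega) h) (by omega)
      rw [Finset.card_insert_of_notMem (by simp [d1, d2, d3]),
        Finset.card_insert_of_notMem (by simp [d4, d5]),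
        Finset.card_insert_of_notMem (by simp [d6]),
        Finset.card_singleton]
  · -- lower bound
    intro c hc hc0
    by_contra hlt
    push_neg at hlt
    have hcdvd : g ∣ toPoly n c := hc
    unfold pairWt at hlt
    rw [card_filter_cast n (fun j => (c j, c (j + 1)) ≠ ((0:K), (0:K)))] at hlt
    set S := Finset.univ.filter (fun i : ZMod n => c i ≠ 0) with hSdef
    set P := Finset.univ.filter (fun i : ZMod n => (c i, c (i + 1)) ≠ ((0:K), (0:K))) with hPdef
    have hPcard : P.card ≤ 3 := by omega
    have hmemS : ∀ i : ZMod n, i ∈ S ↔ c i ≠ 0 := by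
      intro i; simp [hSdef]
    have hmemP : ∀ i : ZMod n, i ∈ P ↔ (c i ≠ 0 ∨ c (i + 1) ≠ 0) := by
      intro i
      simp only [hPdef, Finset.mem_filter, Finset.mem_univ, true_and, Ne, Prod.mk.injEq,
        not_and_or]
    have hSP : S ⊆ P := by
      intro i hi; exact (hmemP i).mpr (Or.inl ((hmemS i).mp hi))
    have hS1P : ∀ x ∈ S, x - 1 ∈ P := by
      intro x hx
      refine (hmemP _).mpr (Or.inr ?_)
      rw [sub_add_cancel]
      exact (hmemS x).mp hx
    have hSne : S.Nonempty := by
      obtain ⟨j, hj⟩ : ∃ j, c j ≠ 0 := by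
        by_contra h; push_neg at h; exact hc0 (funext h)
      exact ⟨j, (hmemS j).mpr hj⟩
    have hsumS : ∀ x : L, (X - C x) ∣ g.map f → (∑ i ∈ S, f (c i) * x ^ i.val) = 0 := by
      intro x hx
      calc ∑ i ∈ S, f (c i) * x ^ i.val
          = ∑ i : ZMod n, f (c i) * x ^ i.val := by
            refine Finset.sum_subset (Finset.subset_univ S) (fun i _ hi => ?_)
            have : c i = 0 := not_not.mp (fun h => hi ((hmemS i).mpr h))
            rw [this, map_zero, zero_mul]
        _ = 0 := heval c hcdvd x hx
    -- the adjacent-support contradiction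
    have hadj : ∀ e : ZMod n, S = {e, e + 1} → False := by
      intro e hS
      have hne : e ≠ e + 1 := by
        intro h
        exact one_ne_zero (left_eq_add.mp h)
      have heS : e ∈ S := by rw [hS]; exact Finset.mem_insert_self _ _
      have hce : c e ≠ 0 := (hmemS e).mp heS
      have E1 := hsumS 1 hd1
      have Eδ := hsumS δ hdδ
      rw [hS, Finset.sum_pair hne] at E1 Eδ
      simp only [one_pow, mul_one] at E1
      have hB : f (c (e + 1)) = -f (c e) := eq_neg_of_add_eq_zero_right E1
      have hval : δ ^ (e + 1).val = δ ^ e.val * δ := by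
        rw [ZMod.val_add, ZMod.val_one, hpowmod, pow_succ]
      rw [hB, hval] at Eδ
      have hfac : f (c e) * δ ^ e.val * (1 - δ) = 0 := by linear_combination Eδ
      rcases mul_eq_zero.mp hfac with h | h
      · rcases mul_eq_zero.mp h with h' | h'
        · exact hce (hf (by rw [h', map_zero]))
        · exact hδ0 (pow_eq_zero_iff'.mp h').1
      · exact hδ1 ((sub_eq_zero.mp h).symm)
    -- case analysis on the size of the support
    have hScard : S.card ≤ 3 := le_trans (Finset.card_le_card hSP) hPcard
    have hSpos : 1 ≤ S.card := Finset.card_pos.mpr hSne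
    rcases (by omega : S.card = 1 ∨ S.card = 2 ∨ S.card = 3) with h1 | h2 | h3
    · obtain ⟨a, ha⟩ := Finset.card_eq_one.mp h1
      have E1 := hsumS 1 hd1
      rw [ha, Finset.sum_singleton, one_pow, mul_one] at E1
      have : c a = 0 := hf (by rw [E1, map_zero])
      have : a ∈ S := by rw [ha]; exact Finset.mem_singleton_self a
      exact ((hmemS a).mp this) (by assumption)
    · obtain ⟨a, b, hab, hS⟩ := Finset.card_eq_two.mp h2
      rcases Decidable.em (b = a + 1) with rfl | hba
      · exact hadj a hS
      rcases Decidable.em (a = b + 1) with rfl | hab'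
      · rw [Finset.pair_comm] at hS
        exact hadj b hS
      -- non-adjacent: P contains four distinct elements
      have hsub : ({a, a - 1, b, b - 1} : Finset (ZMod n)) ⊆ P := by
        intro x hx
        simp only [Finset.mem_insert, Finset.mem_singleton] at hx
        have haS : a ∈ S := by rw [hS]; exact Finset.mem_insert_self _ _
        have hbS : b ∈ S := by rw [hS]; exact Finset.mem_insert_of_mem (Finset.mem_singleton_self b)
        rcases hx with rfl | rfl | rfl | rfl
        · exact hSP haS
        · exact hS1P a haS
        · exact hSP hbS
        · exact hS1P b hbS
      have hone : (1 : ZMod n) ≠ 0 := one_ne_zero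
      have q1 : a ≠ a - 1 := by
        intro h; exact hone (by rwa [eq_comm, sub_eq_self] at h)
      have q2 : a ≠ b - 1 := by
        intro h; exact hba (by rw [eq_sub_iff_add_eq] at h; exact h.symm)
      have q3 : a ≠ b := hab
      have q4 : a - 1 ≠ b := by
        intro h; exact hab' (by rw [eq_comm, eq_sub_iff_add_eq] at h; exact h.symm)
      have q5 : a - 1 ≠ b - 1 := fun h => hab (by rwa [sub_left_inj] at h)
      have q6 : b ≠ b - 1 := by
        intro h; exact hone (by rwa [eq_comm, sub_eq_self] at h)
      have hcard4 : ({a, a - 1, b, b - 1} : Finset (ZMod n)).card = 4 := by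
        rw [Finset.card_insert_of_notMem (by simp [q1, q2, q3]),
          Finset.card_insert_of_notMem (by simp [q4, q5]),
          Finset.card_insert_of_notMem (by simp [q6]),
          Finset.card_singleton]
      have := Finset.card_le_card hsub
      omega
    · -- support of size 3: impossible since then S would be shift-invariant
      have hPS : S = P := Finset.eq_of_subset_of_card_le hSP (by omega)
      have hinj : Function.Injective (fun x : ZMod n => x - 1) := sub_left_injective
      have himg : S.image (· - 1) ⊆ P := by
        intro y hy
        obtain ⟨x, hx, rfl⟩ := Finset.mem_image.mp hy
        exact hS1P x hx
      have hcardimg : (S.image (· - 1)).card = S.card := Finset.card_image_of_injective _ hinj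
      have himgP : S.image (· - 1) = P := Finset.eq_of_subset_of_card_le himg (by omega)
      have hshift : ∀ x ∈ S, x - 1 ∈ S := by
        intro x hx
        rw [hPS, ← himgP]
        exact Finset.mem_image_of_mem _ hx
      have := shift_closed_eq_univ n S hshift hSne
      have hcardn : S.card = n := by rw [this, Finset.card_univ, ZMod.card]
      omega
end

section
/- Let p be an odd prime and let C be the cyclic code of length n = 4p over F_p with generator polynomial g(x) = (x−1)(x^4−1). Then the minimum symbol-pair distance of C equals 6, so C is an AMDS (4p, 6)_p symbol-pair code. -/
open Polynomial
open Finset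

lemma filter_range_map {n : ℕ} [NeZero n] (Q : ZMod n → Prop) [DecidablePred Q] :
    (Finset.univ.filter Q).map ⟨ZMod.val, ZMod.val_injective n⟩
      = (Finset.range n).filter fun i : ℕ => Q ↑i := by
  ext i
  simp only [Finset.mem_map, Finset.mem_filter, Finset.mem_univ, true_and,
    Finset.mem_range, Function.Embedding.coeFn_mk]
  constructor
  · rintro ⟨a, hQ, rfl⟩
    refine ⟨a.val_lt, ?_⟩
    rwa [ZMod.natCast_rightInverse a]
  · rintro ⟨hi, hQ⟩
    exact ⟨↑i, hQ, ZMod.val_cast_of_lt hi⟩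

lemma card_filter_transfer {n : ℕ} [NeZero n] (Q : ZMod n → Prop) [DecidablePred Q] :
    ((Finset.range n).filter fun i : ℕ => Q (↑i : ZMod n)).card
      = (Finset.univ.filter Q).card := by
  rw [← filter_range_map Q, Finset.card_map]

lemma sum_filter_transfer {n : ℕ} [NeZero n] {M : Type*} [AddCommMonoid M]
    (Q : ZMod n → Prop) [DecidablePred Q] (f : ZMod n → M) :
    ∑ i ∈ (Finset.range n).filter (fun i : ℕ => Q (↑i : ZMod n)), f ↑i
      = ∑ a ∈ Finset.univ.filter Q, f a := by
  rw [← filter_range_map Q, Finset.sum_map]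
  refine Finset.sum_congr rfl fun a _ => ?_
  simp [ZMod.natCast_rightInverse a]

lemma sum_range_transfer {n : ℕ} [NeZero n] {M : Type*} [AddCommMonoid M]
    (f : ZMod n → M) :
    ∑ i ∈ Finset.range n, f ↑i = ∑ a : ZMod n, f a := by
  have := sum_filter_transfer (n := n) (fun _ => True) f
  simpa using this

lemma class_sum {p : ℕ} [Fact p.Prime] {n : ℕ} (hn : 0 < n) (c : ZMod n → ZMod p)
    (hc : (X ^ 4 - 1 : (ZMod p)[X]) ∣ toPoly n c) (k : ℕ) :
    ∑ i ∈ (Finset.range n).filter (fun i => i % 4 = k), c ↑i = 0 := by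
  set r : (ZMod p)[X] := ∑ i ∈ Finset.range n, C (c ↑i) * X ^ (i % 4) with hr
  have h1 : (X ^ 4 - 1 : (ZMod p)[X]) ∣ toPoly n c - r := by
    rw [toPoly, hr, ← Finset.sum_sub_distrib]
    apply Finset.dvd_sum
    intro i _
    rw [← mul_sub]
    apply Dvd.dvd.mul_left
    have : (X : (ZMod p)[X]) ^ i - X ^ (i % 4)
        = ((X ^ 4) ^ (i / 4) - 1 ^ (i / 4)) * X ^ (i % 4) := by
      rw [sub_mul, one_pow, one_mul, ← pow_mul, ← pow_add]
      rw [Nat.div_add_mod]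
    rw [this]
    exact Dvd.dvd.mul_right (sub_dvd_pow_sub_pow _ _ _) _
  have h2 : (X ^ 4 - 1 : (ZMod p)[X]) ∣ r := by
    have := dvd_sub hc h1
    simpa using this
  have hdeg : r.degree < (X ^ 4 - 1 : (ZMod p)[X]).degree := by
    have h4 : (X ^ 4 - 1 : (ZMod p)[X]).degree = 4 := by
      have := Polynomial.degree_X_pow_sub_C (R := ZMod p) (n := 4) (by norm_num) 1
      simpa using this
    rw [h4]
    refine lt_of_le_of_lt (Polynomial.degree_sum_le _ _) ?_
    rw [Finset.sup_lt_iff (by exact_mod_cast WithBot.bot_lt_coe 4)]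
    intro i _
    refine lt_of_le_of_lt (Polynomial.degree_C_mul_X_pow_le _ _) ?_
    exact_mod_cast Nat.cast_lt.mpr (Nat.lt_of_lt_of_le (Nat.mod_lt i (by norm_num)) (le_refl 4))
  have hr0 : r = 0 := Polynomial.eq_zero_of_dvd_of_degree_lt h2 hdeg
  have := congrArg (fun f => Polynomial.coeff f k) hr0
  simp only [hr, Polynomial.finset_sum_coeff, Polynomial.coeff_C_mul,
    Polynomial.coeff_X_pow, Polynomial.coeff_zero, mul_ite, mul_one, mul_zero] at this
  rw [Finset.sum_filter]
  simpa [eq_comm] using this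

lemma weighted_sum {p : ℕ} [Fact p.Prime] {n : ℕ} (c : ZMod n → ZMod p)
    (hc : ((X - 1) ^ 2 : (ZMod p)[X]) ∣ toPoly n c) :
    ∑ i ∈ Finset.range n, (i : ZMod p) * c ↑i = 0 := by
  obtain ⟨q, hq⟩ := hc
  have := congrArg (fun f => Polynomial.eval 1 (Polynomial.derivative f)) hq
  simp only [toPoly, map_sum, Polynomial.derivative_mul, Polynomial.derivative_C,
    Polynomial.derivative_X_pow, zero_mul, zero_add, Polynomial.eval_finset_sum,
    Polynomial.eval_mul, Polynomial.eval_C, Polynomial.eval_natCast, Polynomial.eval_pow,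
    Polynomial.eval_one, one_pow, mul_one, Polynomial.derivative_pow,
    Polynomial.derivative_sub, Polynomial.derivative_one, sub_zero, Polynomial.derivative_X,
    Polynomial.eval_add, Polynomial.eval_sub, Polynomial.eval_X, sub_self, mul_zero,
    zero_pow, Polynomial.eval_mul] at this
  rw [show ((0:ZMod p) ^ (2-1)) = 0 from by norm_num, show ((0:ZMod p) ^ 2) = 0 from by norm_num] at this
  simp only [mul_zero, zero_mul, add_zero, zero_add] at this
  rw [← this]
  exact Finset.sum_congr rfl fun i _ => mul_comm _ _

def dd (p : ℕ) : ℕ → ZMod p := fun i =>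
  if i = 0 then 1 else if i = 1 then -1 else if i = 4 then -1 else if i = 5 then 1 else 0

lemma dd_ne {p : ℕ} [Fact p.Prime] (i : ℕ) :
    dd p i ≠ 0 ↔ (i = 0 ∨ i = 1 ∨ i = 4 ∨ i = 5) := by
  unfold dd
  split_ifs with h0 h1 h4 h5 <;> simp_all

section
variable {p : ℕ} [Fact p.Prime] (hp3 : 3 ≤ p)

lemma witness_toPoly (hp3 : 3 ≤ p) :
    toPoly (4*p) (fun a : ZMod (4*p) => dd p a.val)
      = ((X - 1) * (X ^ 4 - 1) : (ZMod p)[X]) := by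
  have h1 : toPoly (4*p) (fun a : ZMod (4*p) => dd p a.val)
      = ∑ i ∈ Finset.range (4*p), C (dd p i) * X ^ i := by
    refine Finset.sum_congr rfl fun i hi => ?_
    show C (dd p (↑i : ZMod (4*p)).val) * X ^ i = _
    rw [ZMod.val_cast_of_lt (Finset.mem_range.mp hi)]
  rw [h1, ← Finset.sum_subset (show ({0,1,4,5} : Finset ℕ) ⊆ Finset.range (4*p) by
      intro x hx; fin_cases hx <;> (simp only [Finset.mem_range]; omega))
    (fun x _ hx => by
      simp only [Finset.mem_insert, Finset.mem_singleton, not_or] at hx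
      obtain ⟨h0, h1, h4, h5⟩ := hx
      simp [dd, h0, h1, h4, h5])]
  rw [show ({0,1,4,5} : Finset ℕ) = insert 0 (insert 1 (insert 4 ({5} : Finset ℕ))) from rfl,
    Finset.sum_insert (by decide), Finset.sum_insert (by decide), Finset.sum_insert (by decide),
    Finset.sum_singleton]
  norm_num [dd]
  ring

lemma witness_pairWt (hp3 : 3 ≤ p) :
    pairWt (4*p) (fun a : ZMod (4*p) => dd p a.val) = 6 := by
  have hlt : 5 < 4 * p := by omega
  have key : (Finset.range (4*p)).filter (fun i : ℕ =>
      ((dd p ((i : ZMod (4*p)).val), dd p (((i : ZMod (4*p)) + 1).val))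
        ≠ ((0 : ZMod p), (0 : ZMod p))))
      = ({0, 1, 3, 4, 5, 4*p - 1} : Finset ℕ) := by
    ext i
    simp only [Finset.mem_filter, Finset.mem_range, Finset.mem_insert, Finset.mem_singleton,
      Ne, Prod.mk.injEq, not_and_or]
    constructor
    · rintro ⟨hi, h⟩
      have hv : (↑i : ZMod (4*p)).val = i := ZMod.val_cast_of_lt hi
      have hv2 : ((↑i : ZMod (4*p)) + 1).val = (i+1) % (4*p) := by
        rw [show ((↑i : ZMod (4*p)) + 1) = ((i+1 : ℕ) : ZMod (4*p)) by push_cast; ring,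
          ZMod.val_natCast]
      rw [hv, hv2] at h
      rcases h with h | h
      · have := (dd_ne i).mp h
        omega
      · have := (dd_ne _).mp h
        rcases Nat.lt_or_ge i (4*p-1) with hlt' | hge
        · rw [Nat.mod_eq_of_lt (by omega)] at this; omega
        · omega
    · intro h
      have hi : i < 4*p := by omega
      refine ⟨hi, ?_⟩
      have hv : (↑i : ZMod (4*p)).val = i := ZMod.val_cast_of_lt hi
      have hv2 : ((↑i : ZMod (4*p)) + 1).val = (i+1) % (4*p) := by
        rw [show ((↑i : ZMod (4*p)) + 1) = ((i+1 : ℕ) : ZMod (4*p)) by push_cast; ring,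
          ZMod.val_natCast]
      rw [hv, hv2]
      rcases h with h|h|h|h|h|h
      · exact Or.inl ((dd_ne i).mpr (by omega))
      · exact Or.inl ((dd_ne i).mpr (by omega))
      · refine Or.inr ((dd_ne _).mpr ?_); rw [Nat.mod_eq_of_lt (by omega)]; omega
      · exact Or.inl ((dd_ne i).mpr (by omega))
      · exact Or.inl ((dd_ne i).mpr (by omega))
      · refine Or.inr ((dd_ne _).mpr ?_)
        rw [show i + 1 = 4*p from by omega, Nat.mod_self]
        omega
  rw [pairWt]
  rw [key]
  rw [Finset.card_insert_of_notMem (by simp; omega),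
    Finset.card_insert_of_notMem (by simp; omega),
    Finset.card_insert_of_notMem (by simp; omega),
    Finset.card_insert_of_notMem (by simp; omega),
    Finset.card_insert_of_notMem (by simp; omega),
    Finset.card_singleton]
end

lemma lower_bound {p : ℕ} [Fact p.Prime] (hodd : Odd p)
    (c : ZMod (4*p) → ZMod p)
    (hc : ((X - 1) * (X ^ 4 - 1) : (ZMod p)[X]) ∣ toPoly (4*p) c)
    (hne : c ≠ 0) : 6 ≤ pairWt (4*p) c := by
  classical
  have hp2 : 2 ≤ p := (Fact.out : p.Prime).two_le
  have hpne2 : p ≠ 2 := by rintro rfl; exact (by decide : ¬ Odd 2) hodd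
  have hp3 : 3 ≤ p := by omega
  haveI : NeZero (4*p) := ⟨by omega⟩
  set φ : ZMod (4*p) →+* ZMod 4 := ZMod.castHom (dvd_mul_right 4 p) (ZMod 4) with hφ
  set ψ : ZMod (4*p) →+* ZMod p := ZMod.castHom (dvd_mul_left p 4) (ZMod p) with hψ
  -- class sums on the ZMod side
  have fiberSum : ∀ j : ZMod 4,
      ∑ a ∈ Finset.univ.filter (fun a => φ a = j), c a = 0 := by
    intro j
    have h4 : (X ^ 4 - 1 : (ZMod p)[X]) ∣ toPoly (4*p) c :=
      dvd_trans (Dvd.intro_left _ rfl) hc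
    have hcs := class_sum (n := 4*p) (by omega) c h4 j.val
    rw [← sum_filter_transfer (Q := fun a => φ a = j) c]
    rw [show ((Finset.range (4*p)).filter fun i : ℕ => φ ↑i = j)
        = ((Finset.range (4*p)).filter fun i : ℕ => i % 4 = j.val) from ?_]
    · exact hcs
    · refine Finset.filter_congr fun i _ => ?_
      have hφn : φ (↑i : ZMod (4*p)) = (↑i : ZMod 4) := by
        simp [hφ, ZMod.castHom_apply, ZMod.cast_natCast (dvd_mul_right 4 p)]
      rw [hφn]
      constructor
      · intro h
        have := congrArg ZMod.val h
        rwa [ZMod.val_natCast] at this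
      · intro h
        have h2 : ((i : ℕ) : ZMod 4) = ((j.val : ℕ) : ZMod 4) := by
          rw [ZMod.natCast_eq_natCast_iff]
          show i % 4 = j.val % 4
          rw [h, Nat.mod_eq_of_lt j.val_lt]
        rwa [ZMod.natCast_rightInverse j] at h2
  -- weighted sum on the ZMod side
  have weightedZ : ∑ a : ZMod (4*p), ψ a * c a = 0 := by
    have h2 : ((X - 1) ^ 2 : (ZMod p)[X]) ∣ toPoly (4*p) c := by
      refine dvd_trans ⟨X ^ 3 + X ^ 2 + X + 1, by ring⟩ hc
    have hw := weighted_sum c h2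
    rw [← sum_range_transfer (f := fun a => ψ a * c a)]
    rw [← hw]
    refine Finset.sum_congr rfl fun i _ => ?_
    have : ψ (↑i : ZMod (4*p)) = (↑i : ZMod p) := by
      simp [hψ, ZMod.castHom_apply, ZMod.cast_natCast (dvd_mul_left p 4)]
    rw [this]
  -- support
  set S : Finset (ZMod (4*p)) := Finset.univ.filter (fun a => c a ≠ 0) with hSdef
  have memS : ∀ a, a ∈ S ↔ c a ≠ 0 := fun a => by simp [hSdef]
  have hS : S.Nonempty := by
    obtain ⟨a, ha⟩ := Function.ne_iff.mp hne
    exact ⟨a, (memS a).mpr ha⟩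
  -- injectivity via CRT
  have inj : ∀ a b : ZMod (4*p), φ a = φ b → ψ a = ψ b → a = b := by
    intro a b h1 h2
    have e1 : φ (a - b) = 0 := by rw [map_sub, h1, sub_self]
    have e2 : ψ (a - b) = 0 := by rw [map_sub, h2, sub_self]
    have v1 : (4:ℕ) ∣ (a-b).val := by
      have : (((a-b).val : ℕ) : ZMod 4) = 0 := by
        rw [ZMod.natCast_val]
        simpa [hφ, ZMod.castHom_apply] using e1
      exact (ZMod.natCast_eq_zero_iff _ _).mp this
    have v2 : p ∣ (a-b).val := by
      have : (((a-b).val : ℕ) : ZMod p) = 0 := by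
        rw [ZMod.natCast_val]
        simpa [hψ, ZMod.castHom_apply] using e2
      exact (ZMod.natCast_eq_zero_iff _ _).mp this
    have hco : Nat.Coprime 4 p := by
      have h2p : Nat.Coprime 2 p := Nat.coprime_two_left.mpr hodd
      simpa using h2p.pow_left 2
    have hdvd : 4*p ∣ (a-b).val := hco.mul_dvd_of_dvd_of_dvd v1 v2
    have hv0 : (a-b).val = 0 := Nat.eq_zero_of_dvd_of_lt hdvd (a-b).val_lt
    have : a - b = 0 := by rwa [ZMod.val_eq_zero] at hv0
    exact sub_eq_zero.mp this
  -- each support element has a partner in the same class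
  have partner : ∀ a ∈ S, ∃ b ∈ S, b ≠ a ∧ φ b = φ a := by
    intro a ha
    by_contra hcon
    push_neg at hcon
    have h0 := fiberSum (φ a)
    rw [Finset.sum_eq_single a ?h1 ?h2] at h0
    · exact (memS a).mp ha h0
    case h1 =>
      intro b hb hba
      by_contra hb0
      exact hcon b ((memS b).mpr hb0) hba (Finset.mem_filter.mp hb).2
    case h2 =>
      intro h
      exact absurd (show a ∈ Finset.filter (fun x => φ x = φ a) Finset.univ from
        Finset.mem_filter.mpr ⟨Finset.mem_univ a, rfl⟩) h
  have fib_two : ∀ a ∈ S, 2 ≤ (S.filter (fun x => φ x = φ a)).card := by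
    intro a ha
    obtain ⟨b, hb, hba, hφb⟩ := partner a ha
    have hsub : ({a, b} : Finset _) ⊆ S.filter (fun x => φ x = φ a) := by
      intro x hx
      rcases Finset.mem_insert.mp hx with rfl | hx
      · exact Finset.mem_filter.mpr ⟨ha, rfl⟩
      · rw [Finset.mem_singleton.mp hx]
        exact Finset.mem_filter.mpr ⟨hb, hφb⟩
    calc 2 = ({a,b} : Finset _).card := (Finset.card_pair (Ne.symm hba)).symm
    _ ≤ _ := Finset.card_le_card hsub
  have fib_disj : ∀ a b : ZMod (4*p), φ a ≠ φ b →
      Disjoint (S.filter (fun x => φ x = φ a)) (S.filter (fun x => φ x = φ b)) := by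
    intro a b hab
    rw [Finset.disjoint_left]
    intro x hx1 hx2
    exact hab ((Finset.mem_filter.mp hx1).2 ▸ (Finset.mem_filter.mp hx2).2)
  have one_ne : (0 : ZMod 4) ≠ 1 := by decide
  have phi_succ_ne : ∀ x : ZMod (4*p), φ (x+1) ≠ φ x := by
    intro x h
    rw [map_add, map_one] at h
    exact one_ne (by linear_combination -h)
  -- shifted support
  set S' : Finset (ZMod (4*p)) := S.image (fun x => x - 1) with hS'def
  have memS' : ∀ a, a ∈ S' ↔ c (a + 1) ≠ 0 := by
    intro a
    simp only [hS'def, Finset.mem_image]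
    constructor
    · rintro ⟨b, hb, rfl⟩
      have := (memS b).mp hb
      simpa [sub_add_cancel] using this
    · intro h
      exact ⟨a + 1, (memS _).mpr h, by ring⟩
  have hT : pairWt (4*p) c
      = (Finset.univ.filter
          (fun a : ZMod (4*p) => (c a, c (a+1)) ≠ ((0:ZMod p),0))).card :=
    card_filter_transfer (n := 4*p) (fun a => (c a, c (a+1)) ≠ ((0:ZMod p),0))
  have hTeq : (Finset.univ.filter
      (fun a : ZMod (4*p) => (c a, c (a+1)) ≠ ((0:ZMod p),0))) = S ∪ S' := by
    ext a
    simp only [Ne, Prod.mk.injEq, not_and_or, Finset.mem_filter, Finset.mem_univ, true_and,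
      Finset.mem_union]
    rw [memS a, memS' a]
  have hS'card : S'.card = S.card := Finset.card_image_of_injective _ sub_left_injective
  have hcount : pairWt (4*p) c + (S ∩ S').card = 2 * S.card := by
    rw [hT, hTeq, Finset.card_union_add_card_inter, hS'card]
    ring
  have memInter : ∀ a, a ∈ S ∩ S' ↔ (a ∈ S ∧ a + 1 ∈ S) := by
    intro a
    rw [Finset.mem_inter, memS' a, ← memS (a+1)]
  have hAle : (S ∩ S').card ≤ S.card := Finset.card_le_card Finset.inter_subset_left
  -- |S| ≥ 3
  obtain ⟨a0, ha0⟩ := hS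
  obtain ⟨b0, hb0, hb0a, hφ0⟩ := partner a0 ha0
  have hk2 : 2 ≤ S.card := Finset.one_lt_card.mpr ⟨a0, ha0, b0, hb0, Ne.symm hb0a⟩
  have hk3 : 3 ≤ S.card := by
    rcases Nat.lt_or_ge S.card 3 with h | h
    · exfalso
      have hcard2 : S.card = 2 := by omega
      obtain ⟨a, b, hab, hSab⟩ := Finset.card_eq_two.mp hcard2
      have haS : a ∈ S := by rw [hSab]; simp
      have hbS : b ∈ S := by rw [hSab]; simp
      obtain ⟨b', hb', hb'a, hφ'⟩ := partner a haS
      have hb'b : b' = b := by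
        rw [hSab] at hb'
        rcases Finset.mem_insert.mp hb' with rfl | h'
        · exact absurd rfl hb'a
        · exact Finset.mem_singleton.mp h'
      rw [hb'b] at hφ' hb'a
      have h0 := fiberSum (φ a)
      have hfilter : (Finset.univ.filter (fun x : ZMod (4*p) => φ x = φ a)).filter
          (fun x => c x ≠ 0) = ({a, b} : Finset _) := by
        ext x
        simp only [Finset.mem_filter, Finset.mem_univ, true_and, Finset.mem_insert,
          Finset.mem_singleton]
        constructor
        · rintro ⟨h1, h2⟩
          have : x ∈ S := (memS x).mpr h2
          rw [hSab] at this
          simpa using this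
        · rintro (h | h)
          · rw [h]
            exact ⟨rfl, (memS a).mp haS⟩
          · rw [h]
            exact ⟨hφ', (memS b).mp hbS⟩
      rw [← Finset.sum_filter_ne_zero, hfilter, Finset.sum_pair hab] at h0
      have h1 := weightedZ
      rw [← Finset.sum_subset (Finset.subset_univ ({a,b} : Finset _))
        (fun x _ hx => by
          have hxS : x ∉ S := by rw [hSab]; exact hx
          have hcx : c x = 0 := not_not.mp (fun hc0 => hxS ((memS x).mpr hc0))
          rw [hcx, mul_zero])] at h1
      rw [Finset.sum_pair hab] at h1
      have hcb : c b = - c a := by linear_combination h0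
      rw [hcb] at h1
      have hz : (ψ a - ψ b) * c a = 0 := by linear_combination h1
      rcases mul_eq_zero.mp hz with h' | h'
      · exact hab (inj a b hφ'.symm (sub_eq_zero.mp h'))
      · exact (memS a).mp haS h'
    · exact h
  rcases Nat.lt_or_ge S.card 5 with hlt5 | hge5
  · have hcase : S.card = 3 ∨ S.card = 4 := by omega
    rcases hcase with hcard | hcard
    · -- |S| = 3 : all elements in one class, no adjacencies
      have hconst : ∀ x ∈ S, ∀ y ∈ S, φ x = φ y := by
        intro x hx y hy
        by_contra hxy
        have hd := fib_disj x y hxy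
        have hsub : (S.filter (fun z => φ z = φ x) ∪ S.filter (fun z => φ z = φ y)) ⊆ S :=
          Finset.union_subset (Finset.filter_subset _ _) (Finset.filter_subset _ _)
        have hcardu := Finset.card_le_card hsub
        rw [Finset.card_union_of_disjoint hd] at hcardu
        have h1 := fib_two x hx
        have h2 := fib_two y hy
        omega
      have hempty : (S ∩ S').card = 0 := by
        rw [Finset.card_eq_zero, Finset.eq_empty_iff_forall_notMem]
        intro x hx
        obtain ⟨hx1, hx2⟩ := (memInter x).mp hx
        exact phi_succ_ne x (hconst (x+1) hx2 x hx1)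
      omega
    · -- |S| = 4 : at most 2 adjacencies
      have hA : (S ∩ S').card ≤ 2 := by
        by_contra hA3
        push_neg at hA3
        obtain ⟨x0, hx0⟩ : (S ∩ S').Nonempty := Finset.card_pos.mp (by omega)
        obtain ⟨hy1, hy2⟩ := (memInter x0).mp hx0
        have hconst : ∀ x ∈ S ∩ S', φ x = φ x0 := by
          intro x hx
          by_contra hxy
          obtain ⟨hx1, hx2⟩ := (memInter x).mp hx
          have hd := fib_disj x x0 hxy
          have hsub : (S.filter (fun z => φ z = φ x) ∪ S.filter (fun z => φ z = φ x0)) ⊆ S :=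
            Finset.union_subset (Finset.filter_subset _ _) (Finset.filter_subset _ _)
          have hcardu := Finset.card_le_card hsub
          rw [Finset.card_union_of_disjoint hd] at hcardu
          have h1 := fib_two x hx1
          have h2 := fib_two x0 hy1
          have hunion : (S.filter (fun z => φ z = φ x) ∪ S.filter (fun z => φ z = φ x0)) = S :=
            Finset.eq_of_subset_of_card_le hsub
              (by rw [Finset.card_union_of_disjoint hd]; omega)
          have hφx1 : φ (x+1) = φ x0 := by
            have hmem : x + 1 ∈ S.filter (fun z => φ z = φ x) ∪
                S.filter (fun z => φ z = φ x0) := by rw [hunion]; exact hx2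
            rcases Finset.mem_union.mp hmem with hmm | hmm
            · exact absurd (Finset.mem_filter.mp hmm).2 (phi_succ_ne x)
            · exact (Finset.mem_filter.mp hmm).2
          have hφx01 : φ (x0+1) = φ x := by
            have hmem : x0 + 1 ∈ S.filter (fun z => φ z = φ x) ∪
                S.filter (fun z => φ z = φ x0) := by rw [hunion]; exact hy2
            rcases Finset.mem_union.mp hmem with hmm | hmm
            · exact (Finset.mem_filter.mp hmm).2
            · exact absurd (Finset.mem_filter.mp hmm).2 (phi_succ_ne x0)
          rw [map_add, map_one] at hφx1 hφx01
          have h20 : (2 : ZMod 4) = 0 := by linear_combination hφx1 + hφx01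
          exact absurd h20 (by decide)
        have hsub1 : S ∩ S' ⊆ S.filter (fun z => φ z = φ x0) := by
          intro x hx
          exact Finset.mem_filter.mpr ⟨((memInter x).mp hx).1, hconst x hx⟩
        have hc1 : 3 ≤ (S.filter (fun z => φ z = φ x0)).card :=
          le_trans (by omega) (Finset.card_le_card hsub1)
        have h2 := fib_two (x0+1) hy2
        have hd := fib_disj (x0+1) x0 (phi_succ_ne x0)
        have hsub : (S.filter (fun z => φ z = φ (x0+1)) ∪ S.filter (fun z => φ z = φ x0)) ⊆ S :=
          Finset.union_subset (Finset.filter_subset _ _) (Finset.filter_subset _ _)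
        have hcardu := Finset.card_le_card hsub
        rw [Finset.card_union_of_disjoint hd] at hcardu
        omega
      omega
  · -- |S| ≥ 5
    rcases Nat.lt_or_ge (S ∩ S').card S.card with hAlt | hAge
    · omega
    · have hinter : S ∩ S' = S := Finset.eq_of_subset_of_card_le Finset.inter_subset_left hAge
      have hstep : ∀ x ∈ S, x + 1 ∈ S := by
        intro x hx
        have hxm : x ∈ S ∩ S' := by rw [hinter]; exact hx
        exact ((memInter x).mp hxm).2
      have hall : ∀ m : ℕ, a0 + (m : ZMod (4*p)) ∈ S := by
        intro m
        induction m with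
        | zero => simpa using ha0
        | succ k ih =>
          have := hstep _ ih
          rwa [show a0 + ((k+1 : ℕ) : ZMod (4*p)) = a0 + (k : ℕ) + 1 by push_cast; ring]
      have huniv : S = Finset.univ := by
        rw [Finset.eq_univ_iff_forall]
        intro y
        have := hall ((y - a0).val)
        rwa [ZMod.natCast_rightInverse (y - a0),
          show a0 + (y - a0) = y from by ring] at this
      have hcard : S.card = 4*p := by rw [huniv, Finset.card_univ, ZMod.card]
      omega

theorem stmt_10 (p : ℕ) [hp : Fact p.Prime] (hodd : Odd p) :
    (∃ c ∈ cyclicCode (4 * p) ((X - 1) * (X ^ 4 - 1) : (ZMod p)[X]),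
      c ≠ 0 ∧ pairWt (4 * p) c = 6) ∧
    (∀ c ∈ cyclicCode (4 * p) ((X - 1) * (X ^ 4 - 1) : (ZMod p)[X]),
      c ≠ 0 → 6 ≤ pairWt (4 * p) c) ∧
    6 = 4 * p - (4 * p - 5) + 1 := by
  have hp2 : 2 ≤ p := (Fact.out : p.Prime).two_le
  have hpne2 : p ≠ 2 := by rintro rfl; exact (by decide : ¬ Odd 2) hodd
  have hp3 : 3 ≤ p := by omega
  haveI : NeZero (4*p) := ⟨by omega⟩
  refine ⟨⟨fun a : ZMod (4*p) => dd p a.val, ?_, ?_, ?_⟩, ?_, by omega⟩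
  · show ((X - 1) * (X ^ 4 - 1) : (ZMod p)[X]) ∣ toPoly (4*p) _
    rw [witness_toPoly hp3]
  · intro h
    have h0 := congrFun h 0
    simp only [ZMod.val_zero, dd, if_pos rfl, Pi.zero_apply] at h0
    exact one_ne_zero h0
  · exact witness_pairWt hp3
  · intro c hc hne
    exact lower_bound hodd c hc hne
end

section
/- Let p ≥ 5 be a prime and let C be the cyclic code of length 3p over F_p with generator polynomial g(x) = (x−1)^4 (x^2 + x + 1). Then C has dimension 3p − 6 and minimum Hamming distance 4. -/
open Polynomial

section CCAux
open Finset
variable {K : Type*} [Field K]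

lemma coeff_toPoly (n : ℕ) (c : ZMod n → K) (j : ℕ) :
    (toPoly n c).coeff j = if j < n then c (↑j : ℕ) else 0 := by
  simp only [toPoly, finset_sum_coeff, coeff_C_mul, coeff_X_pow, mul_ite, mul_one, mul_zero]
  rw [Finset.sum_ite_eq (Finset.range n) j (fun i => c (↑i : ℕ))]
  simp [Finset.mem_range]

lemma toPoly_coeffword (n : ℕ) [NeZero n] (f : K[X]) (hf : f.degree < (n : ℕ)) :
    toPoly n (fun z => f.coeff z.val) = f := by
  ext j
  rw [coeff_toPoly]
  split_ifs with h
  · rw [ZMod.val_cast_of_lt h]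
  · exact (coeff_eq_zero_of_degree_lt (hf.trans_le (by exact_mod_cast Nat.le_of_not_lt h))).symm

lemma degree_toPoly_lt (n : ℕ) (hn : 0 < n) (c : ZMod n → K) : (toPoly n c).degree < (n : ℕ) := by
  apply lt_of_le_of_lt (degree_sum_le _ _)
  rw [Finset.sup_lt_iff (by exact_mod_cast WithBot.bot_lt_coe n)]
  intro i hi
  exact lt_of_le_of_lt (degree_C_mul_X_pow_le _ _) (by exact_mod_cast Finset.mem_range.mp hi)

lemma support_toPoly [DecidableEq K] (n : ℕ) (c : ZMod n → K) :
    (toPoly n c).support = (Finset.range n).filter (fun i : ℕ => c (↑i : ℕ) ≠ 0) := by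
  ext j
  rw [mem_support_iff, coeff_toPoly, Finset.mem_filter, Finset.mem_range]
  by_cases h : j < n <;> simp [h]

lemma card_cyclicCode (n : ℕ) (hn : 0 < n) (g : K[X]) (hg : g.Monic)
    (hd : g.natDegree ≤ n) :
    Nat.card (cyclicCode n g) = Nat.card K ^ (n - g.natDegree) := by
  haveI : NeZero n := ⟨hn.ne'⟩
  set d := g.natDegree with hdd
  have hg0 : g ≠ 0 := hg.ne_zero
  set φ : (degreeLT K (n - d) : Submodule K K[X]) → (cyclicCode n g) := fun q =>
    ⟨fun z => (g * q.1).coeff z.val, by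
      have hdeg : (g * q.1).degree < (n : ℕ) := by
        rcases eq_or_ne q.1 0 with h0 | h0
        · rw [h0, mul_zero, degree_zero]
          exact_mod_cast WithBot.bot_lt_coe n
        · have hq := Polynomial.mem_degreeLT.mp q.2
          have hq' : q.1.natDegree < n - d := by
            rwa [← Polynomial.natDegree_lt_iff_degree_lt h0] at hq
          have : (g * q.1).natDegree = d + q.1.natDegree := natDegree_mul hg0 h0
          rw [← Polynomial.natDegree_lt_iff_degree_lt (mul_ne_zero hg0 h0), this]
          omega
      show g ∣ toPoly n _
      rw [toPoly_coeffword n _ hdeg]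
      exact dvd_mul_right _ _⟩ with hφ
  have hbij : Function.Bijective φ := by
    constructor
    · rintro ⟨q1, hq1⟩ ⟨q2, hq2⟩ h
      have h' := congrArg Subtype.val h
      have e1 : toPoly n (fun z => (g * q1).coeff z.val)
          = toPoly n (fun z => (g * q2).coeff z.val) := by
        simp only [hφ] at h'
        exact congrArg _ h'
      have hdeg : ∀ q : K[X], q ∈ degreeLT K (n - d) → (g * q).degree < (n : ℕ) := by
        intro q hq
        rcases eq_or_ne q 0 with h0 | h0
        · rw [h0, mul_zero, degree_zero]; exact_mod_cast WithBot.bot_lt_coe n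
        · have hq' : q.natDegree < n - d := by
            have := Polynomial.mem_degreeLT.mp hq
            rwa [← Polynomial.natDegree_lt_iff_degree_lt h0] at this
          rw [← Polynomial.natDegree_lt_iff_degree_lt (mul_ne_zero hg0 h0),
            natDegree_mul hg0 h0]
          omega
      rw [toPoly_coeffword n _ (hdeg q1 hq1), toPoly_coeffword n _ (hdeg q2 hq2)] at e1
      exact Subtype.ext (mul_left_cancel₀ hg0 e1)
    · rintro ⟨c, hc⟩
      obtain ⟨q, hq⟩ := hc
      have hfd : (toPoly n c).degree < (n : ℕ) := degree_toPoly_lt n hn c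
      have hqmem : q ∈ degreeLT K (n - d) := by
        rw [Polynomial.mem_degreeLT]
        rcases eq_or_ne q 0 with h0 | h0
        · rw [h0, degree_zero]; exact WithBot.bot_lt_coe _
        · have hf0 : toPoly n c ≠ 0 := by
            rw [hq]; exact mul_ne_zero hg0 h0
          have h1 : (toPoly n c).natDegree < n := by
            rwa [← Polynomial.natDegree_lt_iff_degree_lt hf0] at hfd
          have h2 : (toPoly n c).natDegree = d + q.natDegree := by
            rw [hq]; exact natDegree_mul hg0 h0
          rw [← Polynomial.natDegree_lt_iff_degree_lt h0]
          omega
      refine ⟨⟨q, hqmem⟩, ?_⟩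
      apply Subtype.ext
      funext z
      show (g * q).coeff z.val = c z
      rw [← hq, coeff_toPoly, if_pos (ZMod.val_lt z), ZMod.natCast_rightInverse z]
  have e2 : Nat.card (degreeLT K (n - d) : Submodule K K[X]) = Nat.card K ^ (n - d) := by
    rw [Nat.card_congr (Polynomial.degreeLTEquiv K (n - d)).toEquiv, Nat.card_fun]
    congr 1
    simp [Nat.card_eq_fintype_card]
  rw [← Nat.card_congr (Equiv.ofBijective φ hbij), e2]

lemma dvd_derivative_of {k : ℕ} {f : K[X]} (h : (X - 1) ^ (k+1) ∣ f) :
    (X - 1) ^ k ∣ derivative f := by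
  obtain ⟨w, rfl⟩ := h
  rw [derivative_mul, derivative_pow]
  simp only [derivative_sub, derivative_X, derivative_one, sub_zero, mul_one,
    Nat.add_sub_cancel]
  exact dvd_add ((dvd_mul_left _ _).mul_right w) ((pow_dvd_pow _ (Nat.le_succ k)).mul_right _)

lemma eval_one_eq_zero {f : K[X]} (h : (X - 1) ∣ f) : f.eval 1 = 0 := by
  obtain ⟨w, rfl⟩ := h; simp

lemma cast_pred_mul (n : ℕ) : ((n : K) * ((n - 1 : ℕ) : K)) = (n : K) * ((n : K) - 1) := by
  cases n with
  | zero => simp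
  | succ m => push_cast [Nat.add_sub_cancel]; ring

lemma field2 {a b α β : K} (ha : a ≠ 0) (h0 : a + b = 0) (h1 : a * α + b * β = 0) :
    α = β := by
  have h : a * (α - β) = 0 := by linear_combination h1 - β * h0
  rcases mul_eq_zero.mp h with h | h
  · exact absurd h ha
  · exact sub_eq_zero.mp h

lemma field3 {a b c α β γ : K} (ha : a ≠ 0) (hb : b ≠ 0) (hc : c ≠ 0)
    (h0 : a + b + c = 0) (h1 : a * α + b * β + c * γ = 0)
    (h2 : a * α ^ 2 + b * β ^ 2 + c * γ ^ 2 = 0) : α = β ∧ β = γ := by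
  have hM : b * (β - α) + c * (γ - α) = 0 := by linear_combination h1 - α * h0
  have h2' : b * (β - α) * (β + α) + c * (γ - α) * (γ + α) = 0 := by
    linear_combination h2 - α ^ 2 * h0
  have key1 : c * (γ - α) * (γ - β) = 0 := by linear_combination h2' - (β + α) * hM
  have key2 : b * (β - α) * (β - γ) = 0 := by linear_combination h2' - (γ + α) * hM
  by_cases hbg : β = γ
  · subst hbg
    refine ⟨?_, rfl⟩
    have h' : a * (β - α) = 0 := by linear_combination (β - α) * h0 - hM
    rcases mul_eq_zero.mp h' with h | h
    · exact absurd h ha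
    · exact (sub_eq_zero.mp h).symm
  · exfalso
    have h1' : γ - β ≠ 0 := sub_ne_zero.mpr (fun hh => hbg hh.symm)
    have hγα : γ - α = 0 := by
      rcases mul_eq_zero.mp key1 with h | h
      · rcases mul_eq_zero.mp h with h | h
        · exact absurd h hc
        · exact h
      · exact absurd h h1'
    have h2'' : β - γ ≠ 0 := sub_ne_zero.mpr hbg
    have hβα : β - α = 0 := by
      rcases mul_eq_zero.mp key2 with h | h
      · rcases mul_eq_zero.mp h with h | h
        · exact absurd h hb
        · exact h
      · exact absurd h h2''
    exact hbg ((sub_eq_zero.mp hβα).trans (sub_eq_zero.mp hγα).symm)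

lemma q_dvd_pow_sub (n : ℕ) : (X ^ 2 + X + 1 : K[X]) ∣ X ^ n - X ^ (n % 3) := by
  have h3 : (X ^ 2 + X + 1 : K[X]) ∣ (X ^ 3) ^ (n / 3) - 1 := by
    have ha : (X ^ 2 + X + 1 : K[X]) ∣ X ^ 3 - 1 := ⟨X - 1, by ring⟩
    have hb : (X ^ 3 - 1 : K[X]) ∣ (X ^ 3) ^ (n / 3) - 1 := by
      simpa using sub_dvd_pow_sub_pow (X ^ 3 : K[X]) 1 (n / 3)
    exact ha.trans hb
  have he : (X : K[X]) ^ n - X ^ (n % 3) = ((X ^ 3) ^ (n / 3) - 1) * X ^ (n % 3) := by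
    rw [sub_mul, one_mul, ← pow_mul, ← pow_add, Nat.div_add_mod]
  rw [he]
  exact h3.mul_right _

lemma coeff_eq_of_q_dvd {h : K[X]} (hdvd : (X ^ 2 + X + 1 : K[X]) ∣ h)
    (hdeg : h.natDegree ≤ 2) {u v : ℕ} (hu : u < 3) (hv : v < 3) :
    h.coeff u = h.coeff v := by
  have hqm : (X ^ 2 + X + 1 : K[X]).Monic := by monicity!
  have hqd : (X ^ 2 + X + 1 : K[X]).natDegree = 2 := by compute_degree!
  obtain ⟨w, rfl⟩ := hdvd
  rcases eq_or_ne w 0 with h0 | h0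
  · simp [h0]
  · have hnd := natDegree_mul hqm.ne_zero h0
    rw [hqd] at hnd
    have hw0 : w.natDegree = 0 := by omega
    obtain ⟨u', rfl⟩ := Polynomial.natDegree_eq_zero.mp hw0
    have hco : ∀ m : ℕ, m < 3 → ((X ^ 2 + X + 1 : K[X]) * C u').coeff m = u' := by
      intro m hm
      rw [coeff_mul_C]
      interval_cases m <;> simp [coeff_one, coeff_X]
    rw [hco u hu, hco v hv]

end CCAux
theorem stmt_11 (p : ℕ) [hp : Fact p.Prime] (hp5 : 5 ≤ p) :
    Nat.card (cyclicCode (3 * p) ((X - 1) ^ 4 * (X ^ 2 + X + 1) : (ZMod p)[X]))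
      = p ^ (3 * p - 6) ∧
    (∃ c ∈ cyclicCode (3 * p) ((X - 1) ^ 4 * (X ^ 2 + X + 1) : (ZMod p)[X]),
      c ≠ 0 ∧ hammingWt (3 * p) c = 4) ∧
    (∀ c ∈ cyclicCode (3 * p) ((X - 1) ^ 4 * (X ^ 2 + X + 1) : (ZMod p)[X]),
      c ≠ 0 → 4 ≤ hammingWt (3 * p) c) := by
  have hppos : 0 < p := hp.out.pos
  haveI : NeZero (3 * p) := ⟨by omega⟩
  set g : (ZMod p)[X] := (X - 1) ^ 4 * (X ^ 2 + X + 1) with hgdef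
  have hgm : g.Monic := by rw [hgdef]; monicity!
  have hgd : g.natDegree = 6 := by rw [hgdef]; compute_degree!
  have h3ne : (3 : ZMod p) ≠ 0 := by
    intro h
    have h' : ((3 : ℕ) : ZMod p) = 0 := by exact_mod_cast h
    have h2 := (ZMod.natCast_eq_zero_iff 3 p).mp h'
    have := Nat.le_of_dvd (by omega) h2
    omega
  have hp3 : p % 3 ≠ 0 := by
    intro h
    have h3 : 3 ∣ p := Nat.dvd_of_mod_eq_zero h
    rcases hp.out.eq_one_or_self_of_dvd 3 h3 with h | h <;> omega
  refine ⟨?_, ?_, ?_⟩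
  · -- cardinality
    rw [card_cyclicCode (3 * p) (by omega) g hgm (by rw [hgd]; omega), hgd, Nat.card_zmod]
  · -- existence of a weight-4 codeword
    set F : (ZMod p)[X] := X ^ (p + 3) - X ^ p - X ^ 3 + 1 with hF
    have hcoeff : ∀ m : ℕ, F.coeff m =
        (if m = p + 3 then (1 : ZMod p) else 0) - (if m = p then 1 else 0)
          - (if m = 3 then 1 else 0) + (if m = 0 then 1 else 0) := by
      intro m
      rw [hF]
      simp [coeff_one, coeff_X_pow]
    have hFdeg : F.degree < ((3 * p : ℕ) : WithBot ℕ) := by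
      have h1 : F.natDegree ≤ p + 3 := by
        rw [hF]
        compute_degree <;> omega
      apply lt_of_le_of_lt (degree_le_natDegree)
      exact_mod_cast (by omega : F.natDegree < 3 * p)
    have htp : toPoly (3 * p) (fun z : ZMod (3 * p) => F.coeff z.val) = F :=
      toPoly_coeffword _ _ hFdeg
    refine ⟨fun z : ZMod (3 * p) => F.coeff z.val, ?_, ?_, ?_⟩
    · show g ∣ toPoly (3 * p) _
      rw [htp]
      refine ⟨(X - 1) ^ (p - 3), ?_⟩
      have h43 : 4 + (p - 3) = p + 1 := by omega
      calc F = (X ^ p - 1) * (X ^ 3 - 1) := by rw [hF, pow_add]; ring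
        _ = (X - 1) ^ p * (X ^ 3 - 1) := by rw [sub_pow_char, one_pow]
        _ = (X - 1) ^ (p + 1) * (X ^ 2 + X + 1) := by rw [pow_succ]; ring
        _ = (X - 1) ^ (4 + (p - 3)) * (X ^ 2 + X + 1) := by rw [h43]
        _ = g * (X - 1) ^ (p - 3) := by rw [hgdef, pow_add]; ring
    · intro h
      have h0 := congrFun h 0
      simp only [Pi.zero_apply, ZMod.val_zero] at h0
      rw [hcoeff 0, if_neg (by omega), if_neg (by omega), if_neg (by omega), if_pos rfl] at h0
      norm_num at h0
    · have hfil : (Finset.range (3 * p)).filter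
          (fun i : ℕ => (fun z : ZMod (3 * p) => F.coeff z.val) (↑i) ≠ 0)
          = ({0, 3, p, p + 3} : Finset ℕ) := by
        ext m
        simp only [Finset.mem_filter, Finset.mem_range, Finset.mem_insert, Finset.mem_singleton]
        constructor
        · rintro ⟨hm, hne⟩
          simp only [ZMod.val_cast_of_lt hm] at hne
          by_contra hcon
          push_neg at hcon
          rw [hcoeff m, if_neg (by omega), if_neg (by omega), if_neg (by omega),
            if_neg (by omega)] at hne
          simp at hne
        · intro hm
          have hmlt : m < 3 * p := by rcases hm with rfl | rfl | rfl | rfl <;> omega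
          refine ⟨hmlt, ?_⟩
          simp only [ZMod.val_cast_of_lt hmlt]
          rw [hcoeff m]
          rcases hm with rfl | rfl | rfl | rfl
          · rw [if_neg (by omega), if_neg (by omega), if_neg (by omega), if_pos rfl]
            norm_num
          · rw [if_neg (by omega), if_neg (by omega), if_pos rfl, if_neg (by omega)]
            simp
          · rw [if_neg (by omega), if_pos rfl, if_neg (by omega), if_neg (by omega)]
            simp
          · rw [if_pos rfl, if_neg (by omega), if_neg (by omega), if_neg (by omega)]
            norm_num
      rw [hammingWt, hfil]
      rw [Finset.card_insert_of_notMem (by simp <;> omega),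
        Finset.card_insert_of_notMem (by simp <;> omega),
        Finset.card_insert_of_notMem (by simp <;> omega), Finset.card_singleton]
  · -- minimum distance
    intro c hc hc0
    by_contra hlt
    push_neg at hlt
    set f : (ZMod p)[X] := toPoly (3 * p) c with hf
    have hdvd : g ∣ f := hc
    have hqdvd : (X ^ 2 + X + 1 : (ZMod p)[X]) ∣ f := dvd_trans (dvd_mul_left _ _) hdvd
    have hdvd4 : ((X - 1 : (ZMod p)[X])) ^ 4 ∣ f := dvd_trans (dvd_mul_right _ _) hdvd
    have hfne : f ≠ 0 := by
      intro h
      apply hc0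
      funext z
      have hco := coeff_toPoly (3 * p) c z.val
      rw [if_pos (ZMod.val_lt z), ZMod.natCast_rightInverse z] at hco
      rw [Pi.zero_apply, ← hco, ← hf, h, coeff_zero]
    have hbnd : ∀ m : ℕ, 3 * p ≤ m → f.coeff m = 0 := by
      intro m hm
      rw [hf, coeff_toPoly, if_neg (by omega)]
    have hsupp : f.support.card = hammingWt (3 * p) c := by
      rw [hammingWt, hf, support_toPoly]
    have hcard : f.support.card = 1 ∨ f.support.card = 2 ∨ f.support.card = 3 := by
      have h0' : f.support.card ≠ 0 := fun h => hfne (Polynomial.card_support_eq_zero.mp h)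
      omega
    have h0 : f.eval 1 = 0 :=
      eval_one_eq_zero ((dvd_pow_self _ (by norm_num : (4 : ℕ) ≠ 0)).trans hdvd4)
    have hd1 : ((X - 1 : (ZMod p)[X])) ^ 3 ∣ derivative f :=
      dvd_derivative_of (k := 3) hdvd4
    have h1 : (derivative f).eval 1 = 0 :=
      eval_one_eq_zero ((dvd_pow_self _ (by norm_num : (3 : ℕ) ≠ 0)).trans hd1)
    have hd2 : ((X - 1 : (ZMod p)[X])) ^ 2 ∣ derivative (derivative f) :=
      dvd_derivative_of (k := 2) hd1
    have h2 : (derivative (derivative f)).eval 1 = 0 :=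
      eval_one_eq_zero ((dvd_pow_self _ (by norm_num : (2 : ℕ) ≠ 0)).trans hd2)
    rcases hcard with hcd | hcd | hcd
    · -- weight 1
      obtain ⟨i, x, hx, hfeq⟩ := Polynomial.card_support_eq_one.mp hcd
      rw [hfeq] at h0
      simp at h0
      exact hx h0
    · -- weight 2
      obtain ⟨i, j, hij, x, y, hx, hy, hfeq⟩ := Polynomial.card_support_eq_two.mp hcd
      rw [hfeq] at h0 h1
      have E0 : x + y = 0 := by simpa using h0
      have E1 : x * (i : ZMod p) + y * (j : ZMod p) = 0 := by
        simp only [derivative_add, derivative_C_mul, derivative_X_pow] at h1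
        simpa using h1
      have hab : (i : ZMod p) = (j : ZMod p) := field2 hx E0 E1
      have hjlt : j < 3 * p := by
        by_contra hge
        have hcj : f.coeff j = y := by
          rw [hfeq]
          simp [coeff_X_pow, hij.ne, hij.ne']
        rw [hbnd j (by omega)] at hcj
        exact hy hcj.symm
      have hpd : p ∣ j - i := by
        have hz : ((j - i : ℕ) : ZMod p) = 0 := by
          rw [Nat.cast_sub hij.le, ← hab, sub_self]
        exact (ZMod.natCast_eq_zero_iff _ _).mp hz
      obtain ⟨t1, ht1⟩ := hpd
      have ht1lt : t1 < 3 := by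
        have h' : p * t1 < p * 3 := by rw [← ht1]; omega
        exact Nat.lt_of_mul_lt_mul_left h'
      have ht1pos : t1 ≠ 0 := by rintro rfl; omega
      have hmod : i % 3 ≠ j % 3 := by
        rcases (by omega : t1 = 1 ∨ t1 = 2) with rfl | rfl <;> omega
      set h' : (ZMod p)[X] := C x * X ^ (i % 3) + C y * X ^ (j % 3) with hh'
      have hqd' : (X ^ 2 + X + 1 : (ZMod p)[X]) ∣ h' := by
        have hdiff : (X ^ 2 + X + 1 : (ZMod p)[X]) ∣ f - h' := by
          have he : f - h' = C x * (X ^ i - X ^ (i % 3)) + C y * (X ^ j - X ^ (j % 3)) := by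
            rw [hfeq, hh']; ring
          rw [he]
          exact dvd_add ((q_dvd_pow_sub i).mul_left _) ((q_dvd_pow_sub j).mul_left _)
        have := dvd_sub hqdvd hdiff
        simpa using this
      have hdeg' : h'.natDegree ≤ 2 := by
        apply le_trans (natDegree_add_le _ _)
        apply max_le <;>
          exact le_trans (natDegree_C_mul_le _ _) (by rw [natDegree_X_pow]; omega)
      obtain ⟨t, ht3, hti, htj⟩ : ∃ t, t < 3 ∧ t ≠ i % 3 ∧ t ≠ j % 3 :=
        ⟨3 - i % 3 - j % 3, by omega, by omega, by omega⟩
      have hmod' : ¬ j % 3 = i % 3 := fun hh => hmod hh.symm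
      have hti' : ¬ i % 3 = t := fun hh => hti hh.symm
      have htj' : ¬ j % 3 = t := fun hh => htj hh.symm
      have hcr : h'.coeff (i % 3) = x := by
        rw [hh']
        simp [coeff_X_pow, hmod, hmod', hti, htj, hti', htj']
      have hct : h'.coeff t = 0 := by
        rw [hh']
        simp [coeff_X_pow, hmod, hmod', hti, htj, hti', htj']
      have heq : h'.coeff (i % 3) = h'.coeff t :=
        coeff_eq_of_q_dvd hqd' hdeg' (Nat.mod_lt _ (by norm_num)) ht3
      rw [hcr, hct] at heq
      exact hx heq
    · -- weight 3
      obtain ⟨i, j, k, hij, hjk, x, y, z, hx, hy, hz, hfeq⟩ :=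
        Polynomial.card_support_eq_three.mp hcd
      rw [hfeq] at h0 h1 h2
      have E0 : x + y + z = 0 := by simpa using h0
      have E1 : x * (i : ZMod p) + y * (j : ZMod p) + z * (k : ZMod p) = 0 := by
        simp only [derivative_add, derivative_C_mul, derivative_X_pow] at h1
        simpa using h1
      have E2r : x * ((i : ZMod p) * ((i - 1 : ℕ) : ZMod p))
          + y * ((j : ZMod p) * ((j - 1 : ℕ) : ZMod p))
          + z * ((k : ZMod p) * ((k - 1 : ℕ) : ZMod p)) = 0 := by
        simp only [derivative_add, derivative_C_mul, derivative_X_pow] at h2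
        simpa [mul_assoc] using h2
      have E2 : x * (i : ZMod p) ^ 2 + y * (j : ZMod p) ^ 2 + z * (k : ZMod p) ^ 2 = 0 := by
        rw [cast_pred_mul, cast_pred_mul, cast_pred_mul] at E2r
        linear_combination E2r + E1
      obtain ⟨hab, hbc⟩ := field3 hx hy hz E0 E1 E2
      have hklt : k < 3 * p := by
        by_contra hge
        have hck : f.coeff k = z := by
          rw [hfeq]
          simp [coeff_X_pow, (hij.trans hjk).ne, (hij.trans hjk).ne', hjk.ne, hjk.ne']
        rw [hbnd k (by omega)] at hck
        exact hz hck.symm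
      have hpd1 : p ∣ j - i := by
        have hz' : ((j - i : ℕ) : ZMod p) = 0 := by
          rw [Nat.cast_sub hij.le, ← hab, sub_self]
        exact (ZMod.natCast_eq_zero_iff _ _).mp hz'
      have hpd2 : p ∣ k - j := by
        have hz' : ((k - j : ℕ) : ZMod p) = 0 := by
          rw [Nat.cast_sub hjk.le, ← hbc, sub_self]
        exact (ZMod.natCast_eq_zero_iff _ _).mp hz'
      obtain ⟨t1, ht1⟩ := hpd1
      obtain ⟨t2, ht2⟩ := hpd2
      have ht1lt : t1 < 3 := by
        have h' : p * t1 < p * 3 := by rw [← ht1]; omega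
        exact Nat.lt_of_mul_lt_mul_left h'
      have ht2lt : t2 < 3 := by
        have h' : p * t2 < p * 3 := by rw [← ht2]; omega
        exact Nat.lt_of_mul_lt_mul_left h'
      have ht1pos : t1 ≠ 0 := by rintro rfl; omega
      have ht2pos : t2 ≠ 0 := by rintro rfl; omega
      have hjk' : j = i + p ∧ k = i + 2 * p := by
        rcases (by omega : t1 = 1 ∨ t1 = 2) with rfl | rfl <;>
          rcases (by omega : t2 = 1 ∨ t2 = 2) with rfl | rfl <;> omega
      obtain ⟨hje, hke⟩ := hjk'
      have hm1 : i % 3 ≠ j % 3 := by omega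
      have hm2 : j % 3 ≠ k % 3 := by omega
      have hm3 : i % 3 ≠ k % 3 := by omega
      set h' : (ZMod p)[X] := C x * X ^ (i % 3) + C y * X ^ (j % 3) + C z * X ^ (k % 3)
        with hh'
      have hqd' : (X ^ 2 + X + 1 : (ZMod p)[X]) ∣ h' := by
        have hdiff : (X ^ 2 + X + 1 : (ZMod p)[X]) ∣ f - h' := by
          have he : f - h' = C x * (X ^ i - X ^ (i % 3)) + C y * (X ^ j - X ^ (j % 3))
              + C z * (X ^ k - X ^ (k % 3)) := by
            rw [hfeq, hh']; ring
          rw [he]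
          exact dvd_add (dvd_add ((q_dvd_pow_sub i).mul_left _)
            ((q_dvd_pow_sub j).mul_left _)) ((q_dvd_pow_sub k).mul_left _)
        have := dvd_sub hqdvd hdiff
        simpa using this
      have hdeg' : h'.natDegree ≤ 2 := by
        apply le_trans (natDegree_add_le _ _)
        apply max_le
        · apply le_trans (natDegree_add_le _ _)
          apply max_le <;>
            exact le_trans (natDegree_C_mul_le _ _) (by rw [natDegree_X_pow]; omega)
        · exact le_trans (natDegree_C_mul_le _ _) (by rw [natDegree_X_pow]; omega)
      have hm1' : ¬ j % 3 = i % 3 := fun hh => hm1 hh.symm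
      have hm2' : ¬ k % 3 = j % 3 := fun hh => hm2 hh.symm
      have hm3' : ¬ k % 3 = i % 3 := fun hh => hm3 hh.symm
      have hcx : h'.coeff (i % 3) = x := by
        rw [hh']
        simp [coeff_X_pow, hm1, hm2, hm3, hm1', hm2', hm3']
      have hcy : h'.coeff (j % 3) = y := by
        rw [hh']
        simp [coeff_X_pow, hm1, hm2, hm3, hm1', hm2', hm3']
      have hcz : h'.coeff (k % 3) = z := by
        rw [hh']
        simp [coeff_X_pow, hm1, hm2, hm3, hm1', hm2', hm3']
      have hxy : x = y := by
        rw [← hcx, ← hcy]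
        exact coeff_eq_of_q_dvd hqd' hdeg' (Nat.mod_lt _ (by norm_num))
          (Nat.mod_lt _ (by norm_num))
      have hyz : y = z := by
        rw [← hcy, ← hcz]
        exact coeff_eq_of_q_dvd hqd' hdeg' (Nat.mod_lt _ (by norm_num))
          (Nat.mod_lt _ (by norm_num))
      have h3x : (3 : ZMod p) * x = 0 := by linear_combination E0 + 2 * hxy + hyz
      rcases mul_eq_zero.mp h3x with h | h
      · exact h3ne h
      · exact hx h
end

section
/- Let p ≥ 5 be a prime and let C be the cyclic code of length n = 3p over F_p with generator polynomial g(x) = (x−1)^4 (x^2 + x + 1). Then the minimum symbol-pair distance of C equals 7, so C is an AMDS (3p, 7)_p symbol-pair code. -/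
open Polynomial

/-
Let `S` be the support of a nonzero codeword `c`. Because `X ^ 3 - 1` divides the generator, the
sum of `c` over each residue class mod 3 vanishes, so every class meets `S` in no point or in at
least two. Because `(X - 1) ^ 4` divides it, the moments `∑ c j * j ^ r` vanish for `r < 4` with
`j` read in `ZMod p`, so (Vandermonde) when `S` has at most four images in `ZMod p`, no point of `S`
has an image of its own. By the Chinese remainder theorem two points of one class mod 3 never share
their image. The pair weight is `#S` plus the number of runs of `S`; a class whose predecessor class
misses `S` consists of run starts, and a short count leaves only two shapes for a word of pair
weight at most 6 (one class of at most three points, or `{a, a + 1, a', a' + 1}`), both excluded by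
these facts. Pair weight 7 is attained by the word of `(1 - X ^ p) * (1 + X + X ^ q)` with
`q ∈ {p, p + 1}` and `q ≡ 2 [MOD 3]`, which equals `1 + X - X ^ A - X ^ B`.
-/

open Finset

section Moments

variable {R : Type*} [CommRing R]

lemma iterate_X_mul_derivative_sum (s : Finset ℕ) (a : ℕ → R) (r : ℕ) :
    (fun f : R[X] => X * derivative f)^[r] (∑ i ∈ s, C (a i) * X ^ i) =
      ∑ i ∈ s, C (a i * (i : R) ^ r) * X ^ i := by
  induction r with
  | zero => simp
  | succ r ih =>
    rw [Function.iterate_succ_apply', ih, derivative_sum, mul_sum]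
    refine sum_congr rfl fun i _ => ?_
    rw [derivative_C_mul_X_pow]
    rcases i with _ | i
    · simp
    · simp only [Nat.add_sub_cancel, C_mul, pow_succ, Nat.cast_add_one]
      ring

lemma pow_sub_dvd_iterate_X_mul_derivative {f q : R[X]} {N : ℕ} (h : q ^ N ∣ f) (r : ℕ) :
    q ^ (N - r) ∣ (fun f : R[X] => X * derivative f)^[r] f := by
  induction r with
  | zero => simpa using h
  | succ r ih =>
    rw [Function.iterate_succ_apply', Nat.sub_succ']
    exact (pow_sub_one_dvd_derivative_of_pow_dvd ih).mul_left X

lemma sum_mul_pow_eq_zero_of_X_sub_one_pow_dvd {s : Finset ℕ} {a : ℕ → R} {N r : ℕ}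
    (h : (X - 1) ^ N ∣ ∑ i ∈ s, C (a i) * X ^ i) (hr : r < N) :
    ∑ i ∈ s, a i * (i : R) ^ r = 0 := by
  obtain ⟨q, hq⟩ := (dvd_pow_self (X - 1 : R[X]) (Nat.sub_ne_zero_of_lt hr)).trans
    (pow_sub_dvd_iterate_X_mul_derivative h r)
  rw [iterate_X_mul_derivative_sum] at hq
  simpa [eval_finsetSum] using congrArg (eval 1) hq

end Moments

lemma sum_filter_natCast_eq_zero_of_X_pow_sub_one_dvd {K : Type*} [CommRing K] [IsDomain K]
    {k : ℕ} [NeZero k]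
    {s : Finset ℕ} {a : ℕ → K} (h : X ^ k - 1 ∣ ∑ i ∈ s, C (a i) * X ^ i) (m : ZMod k) :
    ∑ i ∈ s.filter (fun i : ℕ => (i : ZMod k) = m), a i = 0 := by
  set r : K[X] := ∑ i ∈ s, C (a i) * X ^ (i : ZMod k).val
  have hr : X ^ k - 1 ∣ r := by
    have hdiff : X ^ k - 1 ∣ ∑ i ∈ s, C (a i) * X ^ i - r := by
      rw [← sum_sub_distrib]
      refine dvd_sum fun i _ => ?_
      rw [← mul_sub, ZMod.val_natCast]
      have hsplit : (X : K[X]) ^ i - X ^ (i % k) = X ^ (i % k) * (X ^ (k * (i / k)) - 1) := by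
        rw [mul_sub_one, ← pow_add, Nat.mod_add_div]
      rw [hsplit, ← mul_assoc]
      exact (pow_one_sub_dvd_pow_mul_sub_one X k (i / k)).mul_left _
    simpa using dvd_sub h hdiff
  have hr0 : r = 0 := by
    refine eq_zero_of_dvd_of_degree_lt hr ?_
    rw [← C_1, degree_X_pow_sub_C (NeZero.pos k)]
    refine (degree_sum_le _ _).trans_lt ((Finset.sup_lt_iff (WithBot.bot_lt_coe k)).2 fun i _ => ?_)
    exact (degree_C_mul_X_pow_le _ _).trans_lt (WithBot.coe_lt_coe.2 (ZMod.val_lt _))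
  have := congrArg (coeff · m.val) hr0
  simpa [r, finsetSum_coeff, coeff_C_mul_X_pow, (ZMod.val_injective k).eq_iff, eq_comm,
    sum_filter, -ZMod.val_natCast] using this.symm

lemma eq_zero_of_sum_mul_pow_eq_zero {K ι : Type*} [CommRing K] [IsDomain K] [DecidableEq K] {S : Finset ι}
    {a π : ι → K} {N : ℕ} (h : ∀ r < N, ∑ i ∈ S, a i * π i ^ r = 0)
    (hcard : #(S.image π) ≤ N) {i : ι} (hi : i ∈ S) (huniq : ∀ j ∈ S, π j = π i → j = i) :
    a i = 0 := by
  -- test against the polynomial vanishing on every other value of `π`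
  set T := (S.image π).erase (π i)
  set q : K[X] := ∏ y ∈ T, (X - C y)
  have hqdeg : q.natDegree < N := by
    rw [natDegree_prod_of_monic _ _ fun y _ => monic_X_sub_C y]
    simp only [natDegree_X_sub_C, sum_const, smul_eq_mul, mul_one]
    exact (card_erase_lt_of_mem (mem_image_of_mem π hi)).trans_le hcard
  have hsum : ∑ j ∈ S, a j * q.eval (π j) = 0 := by
    simp_rw [eval_eq_sum_range' hqdeg, mul_sum, ← mul_assoc, mul_comm (a _), mul_assoc]
    rw [sum_comm]
    exact sum_eq_zero fun r hr => by rw [← mul_sum, h r (mem_range.1 hr), mul_zero]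
  rw [sum_eq_single_of_mem i hi fun j hj hji => ?_] at hsum
  · refine (mul_eq_zero.1 hsum).resolve_right ?_
    simp only [q, eval_prod, eval_sub, eval_X, eval_C, prod_ne_zero_iff, sub_ne_zero]
    exact fun y hy => (ne_of_mem_erase hy).symm
  · have : π j ∈ T := mem_erase.2 ⟨fun h => hji (huniq j hj h), mem_image_of_mem π hj⟩
    simp [q, eval_prod, prod_eq_zero this]

section Words

variable {n : ℕ} [NeZero n] {F : Type*}

lemma sum_range_natCast {M : Type*} [AddCommMonoid M] (f : ZMod n → M) :
    ∑ i ∈ range n, f i = ∑ j, f j :=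
  sum_nbij' (fun i => (i : ZMod n)) ZMod.val (by simp) (by simp [ZMod.val_lt])
    (fun _ hi => ZMod.val_cast_of_lt (mem_range.1 hi)) (fun j _ => ZMod.natCast_zmod_val j)
    fun _ _ => rfl

def wordSupport [Zero F] [DecidableEq F] (c : ZMod n → F) : Finset (ZMod n) :=
  {j | c j ≠ 0}

@[simp] lemma mem_wordSupport [Zero F] [DecidableEq F] {c : ZMod n → F} {j : ZMod n} :
    j ∈ wordSupport c ↔ c j ≠ 0 := by
  simp [wordSupport]

def runStarts {G : Type*} [AddGroupWithOne G] [DecidableEq G] (S : Finset G) : Finset G :=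
  {j ∈ S | j - 1 ∉ S}

lemma card_filter_mem_or_add_one_mem {G : Type*} [AddGroupWithOne G] [Fintype G] [DecidableEq G]
    (S : Finset G) : #{j | j ∈ S ∨ j + 1 ∈ S} = #S + #(runStarts S) := by
  have hunion : ({j | j ∈ S ∨ j + 1 ∈ S} : Finset G) = S ∪ (runStarts S).image (· - 1) := by
    ext j
    simp only [runStarts, mem_filter, mem_univ, true_and, mem_union, mem_image]
    constructor
    · rintro (hj | hj)
      · exact .inl hj
      · by_cases hjS : j ∈ S
        · exact .inl hjS
        · exact .inr ⟨j + 1, ⟨hj, by simpa using hjS⟩, by simp⟩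
    · rintro (hj | ⟨s, ⟨hs, -⟩, rfl⟩)
      · exact .inl hj
      · exact .inr (by simpa using hs)
  have hdisj : Disjoint S ((runStarts S).image (· - 1)) := by
    simp only [disjoint_left, mem_image, runStarts, mem_filter, not_exists, not_and]
    rintro _ hj s ⟨-, hs⟩ rfl
    exact hs hj
  rw [hunion, card_union_of_disjoint hdisj, card_image_of_injective _ (sub_left_injective)]

lemma pairWt_eq_card_filter [Zero F] [DecidableEq F] (c : ZMod n → F) :
    pairWt n c = #{j | j ∈ wordSupport c ∨ j + 1 ∈ wordSupport c} := by
  rw [pairWt, card_filter, card_filter,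
    sum_range_natCast (fun j => if (c j, c (j + 1)) ≠ (0, 0) then 1 else 0)]
  simp only [wordSupport, mem_filter, mem_univ, true_and, ne_eq, Prod.mk.injEq, not_and_or]

lemma pairWt_eq_card_add_card_runStarts [Zero F] [DecidableEq F] (c : ZMod n → F) :
    pairWt n c = #(wordSupport c) + #(runStarts (wordSupport c)) := by
  rw [pairWt_eq_card_filter, card_filter_mem_or_add_one_mem]

lemma runStarts_nonempty {S : Finset (ZMod n)} (hS : S.Nonempty)
    (hSu : S ≠ univ) : (runStarts S).Nonempty := by
  by_contra h
  simp only [not_nonempty_iff_eq_empty, runStarts, filter_eq_empty_iff, not_not] at h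
  obtain ⟨s, hs⟩ := hS
  have hsub : ∀ k : ℕ, s - k ∈ S := by
    intro k
    induction k with
    | zero => simpa using hs
    | succ k ih => simpa [sub_add_eq_sub_sub] using h ih
  exact hSu (eq_univ_of_forall fun j => by simpa using hsub (s - j).val)

end Words

section ResidueClasses

variable {G : Type*} (ρ : G → ZMod 3) (S : Finset G)

lemma card_eq_card_filter_add_card_filter_add_card_filter (m : ZMod 3) :
    #S = #{j ∈ S | ρ j = m} + #{j ∈ S | ρ j = m + 1} + #{j ∈ S | ρ j = m - 1} := by
  have huniv : (univ : Finset (ZMod 3)) = {m, m + 1, m - 1} := by revert m; decide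
  have h₁ : m ∉ ({m + 1, m - 1} : Finset (ZMod 3)) := by revert m; decide
  have h₂ : m + 1 ≠ m - 1 := by revert m; decide
  rw [card_eq_sum_card_fiberwise (fun j _ => mem_univ (ρ j)), huniv, sum_insert h₁,
    sum_pair h₂, add_assoc]

variable {ρ S}

lemma two_le_card_filter {m : ZMod 3} (hclass : ∀ i ∈ S, ∃ j ∈ S, j ≠ i ∧ ρ j = ρ i)
    (hm : {j ∈ S | ρ j = m}.Nonempty) : 2 ≤ #{j ∈ S | ρ j = m} := by
  obtain ⟨i, hi⟩ := hm
  obtain ⟨hiS, rfl⟩ := mem_filter.1 hi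
  obtain ⟨j, hjS, hji, hj⟩ := hclass i hiS
  exact one_lt_card.2 ⟨j, mem_filter.2 ⟨hjS, hj⟩, i, hi, hji⟩

lemma exists_filter_nonempty_and_filter_sub_one_eq_empty
    (hclass : ∀ i ∈ S, ∃ j ∈ S, j ≠ i ∧ ρ j = ρ i) (hS : S.Nonempty) (hcard : #S < 6) :
    ∃ m, {j ∈ S | ρ j = m}.Nonempty ∧ {j ∈ S | ρ j = m - 1} = ∅ := by
  by_contra! h
  obtain ⟨a, ha⟩ := hS
  have h₀ : {j ∈ S | ρ j = ρ a}.Nonempty := ⟨a, mem_filter.2 ⟨ha, rfl⟩⟩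
  have h₁ := h _ h₀
  have h₂ := h _ h₁
  have hS := card_eq_card_filter_add_card_filter_add_card_filter ρ S (ρ a - 1)
  rw [sub_add_cancel] at hS
  have := two_le_card_filter hclass h₀
  have := two_le_card_filter hclass h₁
  have := two_le_card_filter hclass h₂
  omega

variable {R : Type*} [Ring R] [DecidableEq R] (ρ : R →+* ZMod 3) {S : Finset R} {m : ZMod 3}

lemma filter_subset_runStarts (hm : {j ∈ S | ρ j = m - 1} = ∅) :
    {j ∈ S | ρ j = m} ⊆ runStarts S := fun j hj => by
  obtain ⟨hjS, hjm⟩ := mem_filter.1 hj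
  refine mem_filter.2 ⟨hjS, fun h => ?_⟩
  have : j - 1 ∈ {j ∈ S | ρ j = m - 1} := mem_filter.2 ⟨h, by simp [hjm]⟩
  rw [hm] at this
  exact notMem_empty _ this

lemma mem_runStarts_or_sub_one_mem_runStarts (hm : {j ∈ S | ρ j = m - 1} = ∅)
    (hstarts : runStarts S = {j ∈ S | ρ j = m}) {j : R} (hj : j ∈ S) :
    j ∈ runStarts S ∨ j - 1 ∈ runStarts S := by
  by_cases hjm : ρ j = m
  · exact .inl (filter_subset_runStarts ρ hm (mem_filter.2 ⟨hj, hjm⟩))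
  have hj1 : j - 1 ∈ S := by
    by_contra h
    have : j ∈ runStarts S := mem_filter.2 ⟨hj, h⟩
    rw [hstarts] at this
    exact hjm (mem_filter.1 this).2
  have hρj : ρ j = m + 1 := by
    have hj' : ρ j ≠ m - 1 := fun h => by
      simpa [hm] using (mem_filter.2 ⟨hj, h⟩ : j ∈ {j ∈ S | ρ j = m - 1})
    have : ∀ x m : ZMod 3, x ≠ m → x ≠ m - 1 → x = m + 1 := by decide
    exact this _ _ hjm hj'
  rw [hstarts]
  exact .inr (mem_filter.2 ⟨hj1, by simp [hρj]⟩)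

end ResidueClasses

lemma false_of_forall_mem_eq_or_sub_one_eq {R K : Type*} [Ring R] [Field K] [DecidableEq K]
    (π : R →+* K) (h2 : (2 : K) ≠ 0) {S : Finset R} {a a' : R} (ha : a ∈ S) (ha' : a' ∈ S)
    (hπ : π a ≠ π a') (hS : ∀ j ∈ S, j = a ∨ j = a' ∨ j - 1 = a ∨ j - 1 = a')
    (himage : ∀ i ∈ S, #(S.image π) ≤ 4 → ∃ j ∈ S, j ≠ i ∧ π j = π i) : False := by
  have hsucc : ∀ j x, j - 1 = x → π j = π x + 1 := by rintro j x rfl; simp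
  have hcard : #(S.image π) ≤ 4 := by
    refine (card_le_card fun z hz => ?_).trans (card_le_four (a := π a) (b := π a')
      (c := π a + 1) (d := π a' + 1))
    obtain ⟨j, hj, rfl⟩ := mem_image.1 hz
    rcases hS j hj with rfl | rfl | h | h
    · simp
    · simp
    · simp [hsucc _ _ h]
    · simp [hsucc _ _ h]
  have key : ∀ x y, x ∈ S → (∀ j ∈ S, j = x ∨ j = y ∨ j - 1 = x ∨ j - 1 = y) →
      π x ≠ π y → π x = π y + 1 := by
    intro x y hx hS hxy
    obtain ⟨j, hj, hjx, hπj⟩ := himage x hx hcard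
    rcases hS j hj with rfl | rfl | h | h
    · exact absurd rfl hjx
    · exact absurd hπj.symm hxy
    · rw [hsucc j x h] at hπj
      simp at hπj
    · rw [← hπj, hsucc j y h]
  have h₁ := key a a' ha hS hπ
  have h₂ := key a' a ha' (fun j hj => by rcases hS j hj with h | h | h | h <;> simp [h]) hπ.symm
  exact h2 (by linear_combination -h₁ - h₂)

theorem seven_le_card_add_card_runStarts {n : ℕ} [NeZero n] {K : Type*} [Field K]
    [DecidableEq K] (ρ : ZMod n →+* ZMod 3) (π : ZMod n →+* K)
    (hρπ : ∀ i j, ρ i = ρ j → π i = π j → i = j) (h2 : (2 : K) ≠ 0) (hn : 7 ≤ n)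
    {S : Finset (ZMod n)} (hS : S.Nonempty)
    (hclass : ∀ i ∈ S, ∃ j ∈ S, j ≠ i ∧ ρ j = ρ i)
    (himage : ∀ i ∈ S, #(S.image π) ≤ 4 → ∃ j ∈ S, j ≠ i ∧ π j = π i) :
    7 ≤ #S + #(runStarts S) := by
  by_contra! hlt
  have hstarts : 0 < #(runStarts S) := card_pos.2 <| runStarts_nonempty hS fun h => by
    rw [h, card_univ, ZMod.card] at hlt
    omega
  obtain ⟨m, hm, hm'⟩ := exists_filter_nonempty_and_filter_sub_one_eq_empty hclass hS (by omega)
  have hsub := filter_subset_runStarts ρ hm'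
  have hcard := card_eq_card_filter_add_card_filter_add_card_filter ρ S m
  rw [hm', card_empty, add_zero] at hcard
  have hm2 := two_le_card_filter hclass hm
  have hsub_card := card_le_card hsub
  obtain hm1 | hm1 := {j ∈ S | ρ j = m + 1}.eq_empty_or_nonempty
  · -- `S` is a single residue class, on which `π` is injective
    rw [hm1, card_empty, add_zero] at hcard
    have hS_eq : {j ∈ S | ρ j = m} = S := eq_of_subset_of_card_le (filter_subset _ _) hcard.le
    obtain ⟨a, ha⟩ := hm
    rw [hS_eq] at ha
    obtain ⟨j, hj, hja, hπ⟩ := himage a ha (card_image_le.trans (by omega))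
    rw [← hS_eq] at ha hj
    exact hja (hρπ _ _ ((mem_filter.1 hj).2.trans (mem_filter.1 ha).2.symm) hπ)
  · -- `S = {a, a', a + 1, a' + 1}` with `a`, `a'` in one residue class
    have hm12 := two_le_card_filter hclass hm1
    have hstarts_eq : runStarts S = {j ∈ S | ρ j = m} :=
      (eq_of_subset_of_card_le hsub (by omega)).symm
    obtain ⟨a, a', hne, haa'⟩ := card_eq_two.1 (show #{j ∈ S | ρ j = m} = 2 by omega)
    have ha := mem_filter.1 (haa' ▸ mem_insert_self a {a'})
    have ha' := mem_filter.1 (haa' ▸ mem_insert_of_mem (mem_singleton_self a'))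
    refine false_of_forall_mem_eq_or_sub_one_eq π h2 ha.1 ha'.1
      (fun h => hne (hρπ _ _ (ha.2.trans ha'.2.symm) h)) (fun j hj => ?_) himage
    have := mem_runStarts_or_sub_one_mem_runStarts ρ hm' hstarts_eq hj
    simp only [hstarts_eq, haa', mem_insert, mem_singleton] at this
    tauto

section Codewords

variable {n : ℕ} [NeZero n] {F : Type*} [CommRing F] {c : ZMod n → F}

lemma sum_filter_castHom_eq_zero [IsDomain F] {k : ℕ} [NeZero k] (hk : k ∣ n) (h : X ^ k - 1 ∣ toPoly n c)
    (m : ZMod k) : ∑ j with ZMod.castHom hk (ZMod k) j = m, c j = 0 := by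
  rw [sum_filter, ← sum_range_natCast]
  simpa [sum_filter] using sum_filter_natCast_eq_zero_of_X_pow_sub_one_dvd h m

lemma sum_mul_pow_eq_zero (π : ZMod n →+* F) {N r : ℕ} (h : (X - 1) ^ N ∣ toPoly n c)
    (hr : r < N) : ∑ j, c j * π j ^ r = 0 := by
  rw [← sum_range_natCast]
  simpa using sum_mul_pow_eq_zero_of_X_sub_one_pow_dvd h hr

end Codewords

lemma eq_of_ringHom_eq_of_ringHom_eq {p q : ℕ} (h : p.Coprime q) (ρ : ZMod (p * q) →+* ZMod p)
    (π : ZMod (p * q) →+* ZMod q) {i j : ZMod (p * q)} (hρ : ρ i = ρ j) (hπ : π i = π j) :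
    i = j := by
  have hρ' : (RingHom.fst _ _).comp (ZMod.chineseRemainder h).toRingHom = ρ := Subsingleton.elim _ _
  have hπ' : (RingHom.snd _ _).comp (ZMod.chineseRemainder h).toRingHom = π := Subsingleton.elim _ _
  refine (ZMod.chineseRemainder h).injective (Prod.ext ?_ ?_)
  · simpa [← hρ'] using hρ
  · simpa [← hπ'] using hπ

theorem seven_le_pairWt_of_mem_cyclicCode {p : ℕ} [Fact p.Prime] (hp5 : 5 ≤ p)
    {c : ZMod (3 * p) → ZMod p}
    (hc : c ∈ cyclicCode (3 * p) ((X - 1) ^ 4 * (X ^ 2 + X + 1) : (ZMod p)[X])) (hc0 : c ≠ 0) :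
    7 ≤ pairWt (3 * p) c := by
  have : NeZero (3 * p) := ⟨by omega⟩
  set ρ := ZMod.castHom (dvd_mul_right 3 p) (ZMod 3)
  set π := ZMod.castHom (dvd_mul_left p 3) (ZMod p)
  have hcube : X ^ 3 - 1 ∣ toPoly (3 * p) c := dvd_trans ⟨(X - 1) ^ 3, by ring⟩ hc
  have hquart : (X - 1) ^ 4 ∣ toPoly (3 * p) c := (dvd_mul_right _ _).trans hc
  have h2 : (2 : ZMod p) ≠ 0 := by
    intro h
    have := Nat.le_of_dvd two_pos ((ZMod.natCast_eq_zero_iff 2 p).1 (by exact_mod_cast h))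
    omega
  have hcop : Nat.Coprime 3 p := (Nat.coprime_primes Nat.prime_three Fact.out).2 (by omega)
  rw [pairWt_eq_card_add_card_runStarts]
  refine seven_le_card_add_card_runStarts ρ π (fun i j => eq_of_ringHom_eq_of_ringHom_eq hcop ρ π)
    h2 (by omega) ?_ (fun i hi => ?_) (fun i hi hcard => ?_)
  · obtain ⟨j, hj⟩ := Function.ne_iff.1 hc0
    exact ⟨j, mem_wordSupport.2 hj⟩
  · by_contra! h
    have hsum := sum_filter_castHom_eq_zero (dvd_mul_right 3 p) hcube (ρ i)
    rw [sum_eq_single_of_mem i ?_ fun j hj hji => ?_] at hsum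
    · exact mem_wordSupport.1 hi hsum
    · exact mem_filter.2 ⟨mem_univ i, rfl⟩
    · by_contra hcj
      exact h j (mem_wordSupport.2 hcj) hji (mem_filter.1 hj).2
  · by_contra! h
    refine mem_wordSupport.1 hi (eq_zero_of_sum_mul_pow_eq_zero (fun r hr => ?_) hcard hi
      fun j hj hπ => not_not.1 fun hji => h j hj hji hπ)
    rw [wordSupport, sum_filter_of_ne fun j _ hj => left_ne_zero_of_mul hj]
    exact sum_mul_pow_eq_zero π hquart hr

def wordOfPoly {F : Type*} [Semiring F] (n : ℕ) (f : F[X]) : ZMod n → F := fun j => f.coeff j.val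

lemma toPoly_wordOfPoly {F : Type*} [Semiring F] {n : ℕ} {f : F[X]} (hf : f.natDegree < n) :
    toPoly n (wordOfPoly n f) = f := by
  conv_rhs => rw [f.as_sum_range' n hf]
  exact sum_congr rfl fun i hi => by
    rw [wordOfPoly, ZMod.val_cast_of_lt (mem_range.1 hi), C_mul_X_pow_eq_monomial]

lemma pairWt_wordOfPoly_le_seven {n : ℕ} [NeZero n] {F : Type*} [Semiring F] [DecidableEq F]
    {f : F[X]} {A B : ℕ}
    (hf : ∀ k, f.coeff k ≠ 0 → k = 0 ∨ k = 1 ∨ k = A ∨ k = B) :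
    pairWt n (wordOfPoly n f) ≤ 7 := by
  set T : Finset (ZMod n) := {0, 1, (A : ZMod n), (B : ZMod n)}
  have hsub : wordSupport (wordOfPoly n f) ⊆ T := fun j hj => by
    rcases hf _ (mem_wordSupport.1 hj) with h | h | h | h <;>
      rw [← ZMod.natCast_zmod_val j, h] <;> simp [T]
  have hlt : #(runStarts T) < #T := card_lt_card (filter_ssubset.2 ⟨1, by simp [T], by simp [T]⟩)
  calc pairWt n (wordOfPoly n f)
      = #{j | j ∈ wordSupport (wordOfPoly n f) ∨ j + 1 ∈ wordSupport (wordOfPoly n f)} :=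
        pairWt_eq_card_filter _
    _ ≤ #{j | j ∈ T ∨ j + 1 ∈ T} :=
        card_le_card (monotone_filter_right _ fun j _ => Or.imp (@hsub j) (@hsub (j + 1)))
    _ = #T + #(runStarts T) := card_filter_mem_or_add_one_mem T
    _ ≤ 7 := by have : #T ≤ 4 := card_le_four; omega

lemma X_sq_add_X_add_one_dvd {R : Type*} [CommRing R] (m : ℕ) :
    (X ^ 2 + X + 1 : R[X]) ∣ 1 + X + X ^ (3 * m + 2) := by
  have h : X ^ 2 + X + 1 ∣ (X ^ 3 - 1 : R[X]) := ⟨X - 1, by ring⟩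
  have := h.trans (pow_one_sub_dvd_pow_mul_sub_one X 3 m)
  convert (dvd_refl (X ^ 2 + X + 1 : R[X])).add (this.mul_left (X ^ 2)) using 1
  ring

lemma X_sub_one_pow_dvd_one_sub_X_pow {R : Type*} [CommRing R] {p : ℕ} [Fact p.Prime]
    [CharP R p] {k : ℕ} (hk : k ≤ p) : (X - 1 : R[X]) ^ k ∣ 1 - X ^ p := by
  refine (pow_dvd_pow _ hk).trans ⟨-1, ?_⟩
  rw [sub_pow_char, one_pow]
  ring

lemma exists_dvd_one_add_X_sub_X_pow_sub_X_pow {p : ℕ} [Fact p.Prime] (hp5 : 5 ≤ p) :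
    ∃ A B, 0 < A ∧ A < 3 * p ∧ 0 < B ∧ B < 3 * p ∧
      ((X - 1) ^ 4 * (X ^ 2 + X + 1) : (ZMod p)[X]) ∣ 1 + X - X ^ A - X ^ B := by
  have hp3 : p % 3 ≠ 0 := fun h => by
    have := (Nat.prime_dvd_prime_iff_eq Nat.prime_three Fact.out).1 (Nat.dvd_of_mod_eq_zero h)
    omega
  obtain ⟨q, m, hq, hqm⟩ : ∃ q m, (q = p ∨ q = p + 1) ∧ q = 3 * m + 2 :=
    if h : p % 3 = 2 then ⟨p, p / 3, .inl rfl, by omega⟩ else ⟨p + 1, p / 3, .inr rfl, by omega⟩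
  have hdvd := mul_dvd_mul (X_sub_one_pow_dvd_one_sub_X_pow (R := ZMod p) (by omega : 4 ≤ p))
    (hqm ▸ X_sq_add_X_add_one_dvd (R := ZMod p) m)
  rcases hq with rfl | rfl
  · exact ⟨q + 1, 2 * q, by omega, by omega, by omega, by omega, by convert hdvd using 1; ring⟩
  · exact ⟨p, 2 * p + 1, by omega, by omega, by omega, by omega, by convert hdvd using 1; ring⟩

theorem exists_mem_cyclicCode_pairWt_le_seven {p : ℕ} [Fact p.Prime] (hp5 : 5 ≤ p) :
    ∃ c ∈ cyclicCode (3 * p) ((X - 1) ^ 4 * (X ^ 2 + X + 1) : (ZMod p)[X]),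
      c ≠ 0 ∧ pairWt (3 * p) c ≤ 7 := by
  have : NeZero (3 * p) := ⟨by omega⟩
  obtain ⟨A, B, hA, hAn, hB, hBn, hdvd⟩ := exists_dvd_one_add_X_sub_X_pow_sub_X_pow hp5
  set f : (ZMod p)[X] := 1 + X - X ^ A - X ^ B
  have hcoeff : ∀ k, f.coeff k ≠ 0 → k = 0 ∨ k = 1 ∨ k = A ∨ k = B := fun k hk => by
    by_contra! h
    simp [f, coeff_one, coeff_X, coeff_X_pow, h.1, h.2.1.symm, h.2.2.1, h.2.2.2] at hk
  have hdeg : f.natDegree < 3 * p := by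
    suffices f.natDegree ≤ 3 * p - 1 by omega
    refine natDegree_le_iff_coeff_eq_zero.2 fun k hk => ?_
    by_contra h
    rcases hcoeff k h with rfl | rfl | rfl | rfl <;> norm_cast at hk <;> omega
  refine ⟨wordOfPoly (3 * p) f, ?_, fun h => ?_, pairWt_wordOfPoly_le_seven hcoeff⟩
  · rwa [cyclicCode, Set.mem_ofPred_eq, toPoly_wordOfPoly hdeg]
  · have hf := toPoly_wordOfPoly hdeg
    rw [h] at hf
    have := congrArg (coeff · 0) hf
    simp [toPoly, f, coeff_one, coeff_X, coeff_X_pow, hA.ne, hB.ne] at this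

theorem stmt_12 (p : ℕ) [hp : Fact p.Prime] (hp5 : 5 ≤ p) :
    (∃ c ∈ cyclicCode (3 * p) ((X - 1) ^ 4 * (X ^ 2 + X + 1) : (ZMod p)[X]),
      c ≠ 0 ∧ pairWt (3 * p) c = 7) ∧
    (∀ c ∈ cyclicCode (3 * p) ((X - 1) ^ 4 * (X ^ 2 + X + 1) : (ZMod p)[X]),
      c ≠ 0 → 7 ≤ pairWt (3 * p) c) ∧
    7 = 3 * p - (3 * p - 6) + 1 := by
  refine ⟨?_, fun c hc hc0 => seven_le_pairWt_of_mem_cyclicCode hp5 hc hc0, by omega⟩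
  obtain ⟨c, hc, hc0, hle⟩ := exists_mem_cyclicCode_pairWt_le_seven hp5
  exact ⟨c, hc, hc0, le_antisymm hle (seven_le_pairWt_of_mem_cyclicCode hp5 hc hc0)⟩
end
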